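/- arXiv:math/0507117 — 12 statements merged into one kernel-verified Lean document; each statement's English description precedes it below -/
import Mathlib

section
/- Let T and G be finite simple graphs with vertex sets V and W. Then the reduced Euler characteristic of Hom(T,G) satisfies χ̃(Hom(T,G)) = Σ_{∅ ≠ S ⊆ V} (−1)^{|S|+1} · χ̃(Hom₊(T[S],G)). Expressed purely combinatorially: ( Σ_{η : V → Finset W, η x ≠ ∅ for all x, and for every edge (x,y) of T every a ∈ η x is adjacent in G to every b ∈ η y} (−1)^{Σ_{x∈V} card(η x) − card V} ) − 1 = Σ_{∅ ≠ S ⊆ V} (−1)^{|S|+1} · ( − Σ_{η : V → Finset W, η x = ∅ for all x ∉ S, and for every edge (x,y) of T with η x and η y both nonempty every a ∈ η x is adjacent in G to every b ∈ η y} (−1)^{Σ_{x∈V} card(η x)} ). -/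
open Classical


lemma my_sum_supersets {V : Type*} [Fintype V] [DecidableEq V] (A : Finset V) :
    ∑ S ∈ Finset.univ.filter (fun S : Finset V => A ⊆ S), (-1 : ℤ) ^ S.card
      = if A = Finset.univ then (-1 : ℤ) ^ Fintype.card V else 0 := by
  classical
  have key : ∑ S ∈ Finset.univ.filter (fun S : Finset V => A ⊆ S), (-1 : ℤ) ^ S.card
      = ∑ B ∈ Aᶜ.powerset, (-1 : ℤ) ^ A.card * (-1 : ℤ) ^ B.card := by
    refine Finset.sum_nbij' (i := fun S => S \ A) (j := fun B => A ∪ B) ?_ ?_ ?_ ?_ ?_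
    · intro S hS
      simp only [Finset.mem_filter, Finset.mem_univ, true_and] at hS
      simp only [Finset.mem_powerset]
      intro x hx
      simp only [Finset.mem_sdiff] at hx
      simp [hx.2]
    · intro B hB
      simp
    · intro S hS
      simp only [Finset.mem_filter, Finset.mem_univ, true_and] at hS
      exact Finset.union_sdiff_of_subset hS
    · intro B hB
      simp only [Finset.mem_powerset] at hB
      apply Finset.union_sdiff_cancel_left
      rw [Finset.disjoint_left]
      intro x hxA hxB
      have := hB hxB
      simp at this
      exact this hxA
    · intro S hS
      simp only [Finset.mem_filter, Finset.mem_univ, true_and] at hS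
      rw [← pow_add]
      congr 1
      rw [Finset.card_sdiff_of_subset hS]
      have := Finset.card_le_card hS
      omega
  rw [key, ← Finset.mul_sum, Finset.sum_powerset_neg_one_pow_card]
  by_cases h : A = Finset.univ
  · subst h
    simp [Finset.card_univ]
  · have : Aᶜ ≠ ∅ := by
      intro hc
      apply h
      rwa [← Finset.compl_eq_empty_iff]
    simp [this, h]

lemma my_sum_supersets' {V : Type*} [Fintype V] [DecidableEq V] (A : Finset V) :
    ∑ S ∈ Finset.univ.filter (fun S : Finset V => S ≠ ∅ ∧ A ⊆ S), (-1 : ℤ) ^ S.card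
      = (if A = Finset.univ then (-1 : ℤ) ^ Fintype.card V else 0)
        - (if A = ∅ then 1 else 0) := by
  classical
  have hset : Finset.univ.filter (fun S : Finset V => S ≠ ∅ ∧ A ⊆ S)
      = (Finset.univ.filter (fun S : Finset V => A ⊆ S)).erase ∅ := by
    ext S
    simp [Finset.mem_erase, and_comm]
  rw [hset]
  by_cases hA : A = ∅
  · subst hA
    rw [Finset.sum_erase_eq_sub (by simp)]
    rw [my_sum_supersets]
    simp
  · rw [Finset.erase_eq_of_notMem (by simp [Finset.subset_empty, hA])]
    rw [my_sum_supersets]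
    simp [hA]

/-- **Euler characteristic formula (Theorem 6.1 / `thm:chi`).**
For finite simple graphs `T` (vertex set `V`) and `G` (vertex set `W`),
`χ̃(Hom(T,G)) = Σ_{∅ ≠ S ⊆ V} (−1)^{|S|+1} χ̃(Hom₊(T[S],G))`,
expressed combinatorially via the cell-indexing functions `η : V → Finset W`. -/
theorem cohomology_of_colorings_of_cycles_stmt0
    {V W : Type*} [Fintype V] [Fintype W] [DecidableEq V] [DecidableEq W]
    (T : SimpleGraph V) (G : SimpleGraph W)
    [DecidableRel T.Adj] [DecidableRel G.Adj] :
    (∑ η ∈ Finset.univ.filter (fun η : V → Finset W =>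
        (∀ x, η x ≠ ∅) ∧
        ∀ x y, T.Adj x y → ∀ a ∈ η x, ∀ b ∈ η y, G.Adj a b),
      (-1 : ℤ) ^ ((∑ x, (η x).card) - Fintype.card V)) - 1
    = ∑ S ∈ Finset.univ.filter (fun S : Finset V => S ≠ ∅),
        (-1 : ℤ) ^ (S.card + 1) *
        (- ∑ η ∈ Finset.univ.filter (fun η : V → Finset W =>
              (∀ x, x ∉ S → η x = ∅) ∧
              ∀ x y, T.Adj x y → η x ≠ ∅ → η y ≠ ∅ →
                ∀ a ∈ η x, ∀ b ∈ η y, G.Adj a b),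
            (-1 : ℤ) ^ (∑ x, (η x).card)) := by
  classical
  -- condition equivalence
  have hcond : ∀ (S : Finset V) (η : V → Finset W),
      ((∀ x, x ∉ S → η x = ∅) ∧
        ∀ x y, T.Adj x y → η x ≠ ∅ → η y ≠ ∅ → ∀ a ∈ η x, ∀ b ∈ η y, G.Adj a b)
      ↔ ((Finset.univ.filter fun x => η x ≠ ∅) ⊆ S ∧
          ∀ x y, T.Adj x y → ∀ a ∈ η x, ∀ b ∈ η y, G.Adj a b) := by
    intro S η
    constructor
    · rintro ⟨h1, h2⟩
      constructor
      · intro x hx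
        simp only [Finset.mem_filter, Finset.mem_univ, true_and] at hx
        by_contra hxS
        exact hx (h1 x hxS)
      · intro x y hxy a ha b hb
        exact h2 x y hxy (fun h => by simp [h] at ha) (fun h => by simp [h] at hb) a ha b hb
    · rintro ⟨h1, h2⟩
      refine ⟨fun x hx => ?_, fun x y hxy _ _ => h2 x y hxy⟩
      by_contra h
      exact hx (h1 (by simp [Finset.mem_filter, h]))
  have hRHS : (∑ S ∈ Finset.univ.filter (fun S : Finset V => S ≠ ∅),
        (-1 : ℤ) ^ (S.card + 1) *
        (- ∑ η ∈ Finset.univ.filter (fun η : V → Finset W =>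
              (∀ x, x ∉ S → η x = ∅) ∧
              ∀ x y, T.Adj x y → η x ≠ ∅ → η y ≠ ∅ →
                ∀ a ∈ η x, ∀ b ∈ η y, G.Adj a b),
            (-1 : ℤ) ^ (∑ x, (η x).card)))
      = ∑ S : Finset V, ∑ η : V → Finset W,
          (if S ≠ ∅ ∧ ((Finset.univ.filter fun x => η x ≠ ∅) ⊆ S ∧
              ∀ x y, T.Adj x y → ∀ a ∈ η x, ∀ b ∈ η y, G.Adj a b) then
            (-1 : ℤ) ^ S.card * (-1 : ℤ) ^ (∑ x, (η x).card) else 0) := by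
    rw [Finset.sum_filter]
    refine Finset.sum_congr rfl fun S _ => ?_
    by_cases hS : S ≠ ∅
    · rw [if_pos hS]
      have h1 : (-1 : ℤ) ^ (S.card + 1) *
          (- ∑ η ∈ Finset.univ.filter (fun η : V → Finset W =>
              (∀ x, x ∉ S → η x = ∅) ∧
              ∀ x y, T.Adj x y → η x ≠ ∅ → η y ≠ ∅ →
                ∀ a ∈ η x, ∀ b ∈ η y, G.Adj a b),
            (-1 : ℤ) ^ (∑ x, (η x).card))
          = ∑ η ∈ Finset.univ.filter (fun η : V → Finset W =>
              (∀ x, x ∉ S → η x = ∅) ∧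
              ∀ x y, T.Adj x y → η x ≠ ∅ → η y ≠ ∅ →
                ∀ a ∈ η x, ∀ b ∈ η y, G.Adj a b),
            (-1 : ℤ) ^ S.card * (-1 : ℤ) ^ (∑ x, (η x).card) := by
        rw [← Finset.mul_sum, pow_succ]
        ring
      rw [h1, Finset.sum_filter]
      refine Finset.sum_congr rfl fun η _ => ?_
      refine if_congr ?_ rfl rfl
      rw [hcond S η]
      simp [hS]
    · rw [if_neg hS]
      push_neg at hS
      simp [hS]
  rw [hRHS, Finset.sum_comm]
  have hInner : ∀ η : V → Finset W,
      (∑ S : Finset V,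
        (if S ≠ ∅ ∧ ((Finset.univ.filter fun x => η x ≠ ∅) ⊆ S ∧
            ∀ x y, T.Adj x y → ∀ a ∈ η x, ∀ b ∈ η y, G.Adj a b) then
          (-1 : ℤ) ^ S.card * (-1 : ℤ) ^ (∑ x, (η x).card) else 0))
      = (if ((∀ x, η x ≠ ∅) ∧ ∀ x y, T.Adj x y → ∀ a ∈ η x, ∀ b ∈ η y, G.Adj a b) then
          (-1 : ℤ) ^ (Fintype.card V) * (-1 : ℤ) ^ (∑ x, (η x).card) else 0)
        - (if ((Finset.univ.filter fun x => η x ≠ ∅) = ∅) then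
            (-1 : ℤ) ^ (∑ x, (η x).card) else 0) := by
    intro η
    by_cases hQ : ∀ x y, T.Adj x y → ∀ a ∈ η x, ∀ b ∈ η y, G.Adj a b
    · have h2 : (∑ S : Finset V,
          (if S ≠ ∅ ∧ ((Finset.univ.filter fun x => η x ≠ ∅) ⊆ S ∧
              ∀ x y, T.Adj x y → ∀ a ∈ η x, ∀ b ∈ η y, G.Adj a b) then
            (-1 : ℤ) ^ S.card * (-1 : ℤ) ^ (∑ x, (η x).card) else 0))
          = ∑ S ∈ Finset.univ.filter (fun S : Finset V =>
              S ≠ ∅ ∧ (Finset.univ.filter fun x => η x ≠ ∅) ⊆ S),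
              (-1 : ℤ) ^ S.card * (-1 : ℤ) ^ (∑ x, (η x).card) := by
        rw [Finset.sum_filter]
        refine Finset.sum_congr rfl fun S _ => ?_
        refine if_congr ?_ rfl rfl
        constructor
        · rintro ⟨a, b, -⟩; exact ⟨a, b⟩
        · rintro ⟨a, b⟩; exact ⟨a, b, hQ⟩
      rw [h2, ← Finset.sum_mul, my_sum_supersets']
      simp only [sub_mul, ite_mul, zero_mul, one_mul]
      congr 1
      · by_cases hA : (Finset.univ.filter fun x => η x ≠ ∅) = Finset.univ
        · rw [if_pos hA, if_pos]
          refine ⟨fun x => ?_, hQ⟩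
          have : x ∈ Finset.univ.filter fun x => η x ≠ ∅ := by
            rw [hA]; exact Finset.mem_univ x
          simpa using this
        · rw [if_neg hA, if_neg]
          rintro ⟨h1, -⟩
          apply hA
          ext x
          simp [h1 x]
    · have hA : ¬ ((Finset.univ.filter fun x => η x ≠ ∅) = ∅) ∨ True := Or.inr trivial
      have hz : (if ((Finset.univ.filter fun x => η x ≠ ∅) = ∅) then
            (-1 : ℤ) ^ (∑ x, (η x).card) else 0) = 0 := by
        rw [if_neg]
        intro hAe
        apply hQ
        intro x y hxy a ha b hb
        exfalso
        have hx : η x = ∅ := by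
          have := Finset.filter_eq_empty_iff.mp hAe (Finset.mem_univ x)
          simpa using this
        simp [hx] at ha
      rw [hz]
      simp [hQ]
  simp only [hInner]
  rw [Finset.sum_sub_distrib]
  have hsecond : (∑ η : V → Finset W,
      (if ((Finset.univ.filter fun x => η x ≠ ∅) = ∅) then
        (-1 : ℤ) ^ (∑ x, (η x).card) else 0)) = 1 := by
    rw [Finset.sum_eq_single (fun _ => (∅ : Finset W))]
    · rw [if_pos (by simp)]
      simp
    · intro η _ hne
      rw [if_neg]
      intro hA
      apply hne
      funext x
      have := Finset.filter_eq_empty_iff.mp hA (Finset.mem_univ x)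
      simpa using this
    · intro h
      exact absurd (Finset.mem_univ _) h
  rw [hsecond]
  congr 1
  rw [Finset.sum_filter]
  apply Finset.sum_congr rfl
  intro η _
  by_cases hc : (∀ x, η x ≠ ∅) ∧ ∀ x y, T.Adj x y → ∀ a ∈ η x, ∀ b ∈ η y, G.Adj a b
  · rw [if_pos hc, if_pos hc]
    have hle : Fintype.card V ≤ ∑ x, (η x).card := by
      rw [← Finset.card_univ, Finset.card_eq_sum_ones]
      exact Finset.sum_le_sum fun x _ =>
        Finset.one_le_card.mpr (Finset.nonempty_iff_ne_empty.mpr (hc.1 x))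
    rw [← pow_add]
    have h2 : Fintype.card V + ∑ x, (η x).card
        = ((∑ x, (η x).card) - Fintype.card V) + 2 * Fintype.card V := by
      rw [two_mul, ← add_assoc, Nat.sub_add_cancel hle]
      exact Nat.add_comm _ _
    rw [h2, pow_add, pow_mul]
    norm_num
  · rw [if_neg hc, if_neg hc]
end

section
/- Let T be a finite simple graph with vertex set V and let n ∈ ℕ. Then χ̃(Hom(T,K_n)) = Σ_{∅ ≠ S ⊆ V} (−1)^{n+|S|} · χ̃(Ind(T[S]))^n. Expressed purely combinatorially: ( Σ_{η : V → Finset(Fin n), η x ≠ ∅ for all x, η x ∩ η y = ∅ whenever x,y adjacent in T} (−1)^{Σ_{x∈V} card(η x) − card V} ) − 1 = Σ_{∅ ≠ S ⊆ V} (−1)^{n+|S|} · ( − Σ_{I ⊆ S, I independent in T} (−1)^{card I} )^n. -/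
/-!
Write `a(S)` for the alternating count of independent subsets of `S`. Expanding `a(S)^n` as a
sum over `n`-tuples of independent subsets of `S` and summing over all `S` with sign `(-1)^|S|`,
the alternating sum over the sets `S ⊇ I₁ ∪ ⋯ ∪ Iₙ` vanishes unless the tuple covers `V`.
Transposing the incidence relation (`x ∈ Iᵢ ↔ i ∈ η x`) identifies covering tuples of
independent sets with the cells `η` of `Hom(T,K_n)`, with matching signs; the term `S = ∅`
contributes the `-1`.
-/

open Classical

open Finset Fintype

lemma neg_one_pow_sub_of_le {a b : ℕ} (h : b ≤ a) :
    (-1 : ℤ) ^ (a - b) = (-1) ^ a * (-1) ^ b := by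
  rw [← pow_sub_mul_pow (-1 : ℤ) h, mul_assoc, ← pow_add, Even.neg_one_pow ⟨b, rfl⟩, mul_one]

section Alternating

variable {α : Type*} [Fintype α] [DecidableEq α]

lemma sum_superset_neg_one_pow_card (U : Finset α) :
    ∑ S with U ⊆ S, (-1 : ℤ) ^ #S = if U = univ then (-1) ^ Fintype.card α else 0 := by
  have h_compl : ∑ S with U ⊆ S, (-1 : ℤ) ^ #S = ∑ R ∈ Uᶜ.powerset, (-1) ^ #Rᶜ :=
    sum_nbij' compl compl (by simp) (fun R hR => by simpa [subset_compl_comm] using hR)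
      (by simp) (by simp) (by simp)
  have h_sign : ∀ R : Finset α, (-1 : ℤ) ^ #Rᶜ = (-1) ^ Fintype.card α * (-1) ^ #R := fun R => by
    rw [card_compl, neg_one_pow_sub_of_le (card_le_univ R)]
  simp_rw [h_compl, h_sign, ← mul_sum, sum_powerset_neg_one_pow_card, compl_eq_empty_iff]
  split_ifs <;> simp

theorem sum_neg_one_pow_card_mul_pow_eq_sum_covers (P : Finset α → Prop) [DecidablePred P]
    (f : Finset α → ℤ) (n : ℕ) :
    ∑ S : Finset α, (-1) ^ #S * (∑ I ∈ S.powerset with P I, f I) ^ n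
      = (-1) ^ Fintype.card α * ∑ p ∈ piFinset (fun _ : Fin n => univ.filter P)
          with univ.sup p = univ, ∏ i, f (p i) := by
  have h_tuples : ∀ S : Finset α, piFinset (fun _ : Fin n => S.powerset.filter P)
      = (piFinset fun _ : Fin n => univ.filter P).filter (fun p => univ.sup p ⊆ S) := fun S => by
    ext p
    simp [Finset.sup_le_iff, forall_and, and_comm]
  calc ∑ S : Finset α, (-1) ^ #S * (∑ I ∈ S.powerset with P I, f I) ^ n
      = ∑ p ∈ piFinset (fun _ : Fin n => univ.filter P),
          (∑ S with univ.sup p ⊆ S, (-1 : ℤ) ^ #S) * ∏ i, f (p i) := by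
        simp_rw [sum_pow', h_tuples, mul_sum, sum_filter, sum_mul, ite_mul, zero_mul]
        rw [sum_comm]
    _ = _ := by
        simp_rw [sum_superset_neg_one_pow_card, ite_mul, zero_mul, sum_ite, sum_const_zero,
          add_zero, mul_sum]

end Alternating

section Transpose

variable {α β : Type*} [Fintype α] [DecidableEq β]

def transposeIncidence (η : α → Finset β) (b : β) : Finset α := {a | b ∈ η a}

@[simp]
lemma mem_transposeIncidence {η : α → Finset β} {a : α} {b : β} :
    a ∈ transposeIncidence η b ↔ b ∈ η a := by
  simp [transposeIncidence]

lemma forall_transposeIncidence_pairwise_iff (r : α → α → Prop) {η : α → Finset β} :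
    (∀ b, ∀ x ∈ transposeIncidence η b, ∀ y ∈ transposeIncidence η b, ¬ r x y)
      ↔ ∀ x y, r x y → η x ∩ η y = ∅ := by
  simp only [mem_transposeIncidence, ← disjoint_iff_inter_eq_empty, disjoint_left]
  grind

variable [Fintype β]

lemma sum_card_transposeIncidence (η : α → Finset β) :
    ∑ b, #(transposeIncidence η b) = ∑ a, #(η a) := by
  simp_rw [transposeIncidence, card_filter]
  rw [sum_comm]
  simp_rw [← card_filter, filter_univ_mem]

variable [DecidableEq α]

def transposeIncidenceEquiv : (α → Finset β) ≃ (β → Finset α) where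
  toFun := transposeIncidence
  invFun := transposeIncidence
  left_inv η := by ext; simp
  right_inv p := by ext; simp

lemma sup_transposeIncidence_eq_univ_iff {η : α → Finset β} :
    univ.sup (transposeIncidence η) = univ ↔ ∀ a, (η a).Nonempty := by
  simp [eq_univ_iff_forall, mem_sup, Finset.Nonempty]

end Transpose

theorem sum_disjoint_on_rel_eq_sum_independent_covers {V β : Type*} [Fintype V] [DecidableEq V]
    [Fintype β] [DecidableEq β] (r : V → V → Prop) [DecidableRel r] :
    ∑ η ∈ univ.filter (fun η : V → Finset β => (∀ x, η x ≠ ∅) ∧ ∀ x y, r x y → η x ∩ η y = ∅),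
        (-1 : ℤ) ^ ((∑ x, #(η x)) - Fintype.card V)
      = (-1) ^ Fintype.card V * ∑ p ∈ piFinset (fun _ : β => univ.filter
            (fun I : Finset V => ∀ x ∈ I, ∀ y ∈ I, ¬ r x y)) with univ.sup p = univ,
          ∏ b, (-1 : ℤ) ^ #(p b) := by
  rw [mul_sum]
  refine sum_equiv transposeIncidenceEquiv (fun η => ?_) (fun η hη => ?_)
  · simp only [mem_filter, mem_univ, true_and, mem_piFinset, transposeIncidenceEquiv,
      Equiv.coe_fn_mk, forall_transposeIncidence_pairwise_iff, sup_transposeIncidence_eq_univ_iff,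
      nonempty_iff_ne_empty, and_comm]
  · have h_card : Fintype.card V ≤ ∑ x, #(η x) := calc
      Fintype.card V = ∑ _ : V, 1 := by simp
      _ ≤ ∑ x, #(η x) := sum_le_sum fun x _ =>
        card_pos.2 (nonempty_iff_ne_empty.2 ((mem_filter.1 hη).2.1 x))
    rw [transposeIncidenceEquiv, Equiv.coe_fn_mk, prod_pow_eq_pow_sum,
      sum_card_transposeIncidence, neg_one_pow_sub_of_le h_card, mul_comm]

/-- **Euler characteristic of `Hom(T,K_n)` via independence complexes
(Theorem 6.2 / `thm:chikn`).**
For a finite simple graph `T` with vertex set `V` and `n ∈ ℕ`,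
`χ̃(Hom(T,K_n)) = Σ_{∅ ≠ S ⊆ V} (−1)^{n+|S|} χ̃(Ind(T[S]))^n`. -/
theorem cohomology_of_colorings_of_cycles_stmt1
    {V : Type*} [Fintype V] [DecidableEq V]
    (T : SimpleGraph V) [DecidableRel T.Adj] (n : ℕ) :
    (∑ η ∈ Finset.univ.filter (fun η : V → Finset (Fin n) =>
        (∀ x, η x ≠ ∅) ∧ ∀ x y, T.Adj x y → η x ∩ η y = ∅),
      (-1 : ℤ) ^ ((∑ x, (η x).card) - Fintype.card V)) - 1
    = ∑ S ∈ Finset.univ.filter (fun S : Finset V => S ≠ ∅),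
        (-1 : ℤ) ^ (n + S.card) *
        (- ∑ I ∈ S.powerset.filter (fun I : Finset V => ∀ x ∈ I, ∀ y ∈ I, ¬ T.Adj x y),
            (-1 : ℤ) ^ I.card) ^ n := by
  have h_sign (k : ℕ) (a : ℤ) : (-1) ^ (n + k) * (-a) ^ n = (-1) ^ k * a ^ n := by
    rw [neg_pow a, pow_add, mul_mul_mul_comm, ← mul_pow, neg_one_mul, neg_neg, one_pow, one_mul]
  rw [sum_disjoint_on_rel_eq_sum_independent_covers,
    ← sum_neg_one_pow_card_mul_pow_eq_sum_covers _ (fun I => (-1 : ℤ) ^ #I)]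
  simp_rw [h_sign]
  rw [filter_ne', sum_erase_eq_sub (mem_univ ∅)]
  simp [filter_singleton]
end

section
/- Let m ≥ 5 and n ≥ 4 be integers and let k = ⌊(m+1)/3⌋. Then ( Σ over all functions η : ZMod m → Finset(Fin n) such that η i ≠ ∅ for every i and η i ∩ η(i+1) = ∅ for every i, of (−1)^{(Σ_i card(η i)) − m} ) − 1 equals (−1)^{n·k+m}·(2^n − 3) if 3 divides m, and (−1)^{n·k+m} otherwise. (Equivalently, χ̃(Hom(C_m,K_n)) = (−1)^{nk−m}(2^n−3) if m = 3k and (−1)^{nk−m} if m = 3k±1.) -/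
/-!
A cell `η` of `Hom(C_m, K_n)` is a closed walk of length `m` for the transfer matrix
`M S T = [S, T ≠ ∅, S ∩ T = ∅] · (-1)^(#T - 1)` on the subsets of `Fin n`, so the Euler
characteristic is `tr M^m`. Let `u` be the indicator of the proper nonempty subsets and
`v T = u T · (-1)^(#T - 1)`. Alternating sums over intervals of the subset lattice give
`M^3 = (-1)^(n-1) · diag u + u vᵀ`, while `M · diag u = M` and `M u = u`. Hence
`tr M^(j+3) = (-1)^(n-1) tr M^j + v ⬝ u` with `v ⬝ u = 1 + (-1)^n`, that is
`tr M^(j+3) - 1 = (-1)^(n-1) (tr M^j - 1)`, and the cases `j = 1, 2, 3` settle the rest.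
-/

open Finset Matrix

theorem Fin.cons_add_one_eq_snoc {α : Type*} {ℓ : ℕ} (a : α) (c : Fin ℓ → α) (k : Fin (ℓ + 1)) :
    (Fin.cons a c : Fin (ℓ + 1) → α) (k + 1) = (Fin.snoc c a : Fin (ℓ + 1) → α) k := by
  induction k using Fin.lastCases with
  | last => simp [Fin.last_add_one]
  | cast j => simp [Fin.coeSucc_eq_succ]

section TraceOfPower

variable {α R : Type*} [Fintype α] [DecidableEq α] [CommSemiring R]

theorem Matrix.pow_succ_apply_eq_sum_prod (A : Matrix α α R) (ℓ : ℕ) (i j : α) :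
    (A ^ (ℓ + 1)) i j =
      ∑ c : Fin ℓ → α, ∏ k : Fin (ℓ + 1),
        A ((Fin.cons i c : Fin (ℓ + 1) → α) k) ((Fin.snoc c j : Fin (ℓ + 1) → α) k) := by
  induction ℓ generalizing j with
  | zero => simp [Fin.snoc]
  | succ ℓ ih =>
    rw [pow_succ, mul_apply, ← (Fin.snocEquiv fun _ => α).sum_comp, Fintype.sum_prod_type]
    refine sum_congr rfl fun u _ => ?_
    rw [ih, sum_mul]
    refine sum_congr rfl fun c _ => ?_
    rw [Fin.prod_univ_castSucc (n := ℓ + 1)]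
    simp [Fin.snocEquiv, Fin.cons_snoc_eq_snoc_cons]

theorem Matrix.trace_pow_eq_sum_prod (A : Matrix α α R) (m : ℕ) [NeZero m] :
    trace (A ^ m) = ∑ η : ZMod m → α, ∏ i, A (η i) (η (i + 1)) := by
  obtain ⟨ℓ, rfl⟩ : ∃ ℓ, m = ℓ + 1 := Nat.exists_eq_add_one.mpr (NeZero.pos m)
  change _ = ∑ η : Fin (ℓ + 1) → α, ∏ i, A (η i) (η (i + 1))
  rw [← (Fin.consEquiv fun _ => α).sum_comp, Fintype.sum_prod_type]
  refine sum_congr rfl fun i _ => ?_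
  rw [diag_apply, pow_succ_apply_eq_sum_prod]
  refine sum_congr rfl fun c _ => prod_congr rfl fun k _ => ?_
  rw [← Fin.cons_add_one_eq_snoc]
  rfl

end TraceOfPower

section SignedSubsetSums

variable {α : Type*} [DecidableEq α]

theorem Finset.sum_Icc_neg_one_pow_card (B C : Finset α) :
    ∑ U ∈ Icc B C, (-1 : ℤ) ^ #U = if B = C then (-1) ^ #B else 0 := by
  by_cases hBC : B ⊆ C
  · have hdisj : ∀ W ∈ (C \ B).powerset, Disjoint B W := fun W hW =>
      disjoint_of_subset_right (mem_powerset.mp hW) disjoint_sdiff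
    rw [Icc_eq_image_powerset hBC, sum_image fun W₁ h₁ W₂ h₂ h => by
      rw [← union_sdiff_cancel_left (hdisj W₁ h₁), ← union_sdiff_cancel_left (hdisj W₂ h₂)]
      exact congrArg (· \ B) h]
    rw [sum_congr rfl fun W hW => by rw [card_union_of_disjoint (hdisj W hW), pow_add],
      ← mul_sum, sum_powerset_neg_one_pow_card]
    by_cases hCB : C ⊆ B
    · simp [subset_antisymm hBC hCB]
    · have hne : B ≠ C := fun h => hCB h.ge
      simp [sdiff_eq_empty_iff_subset, hCB, hne]
  · rw [Icc_eq_empty (by simpa using hBC), sum_empty, if_neg (by rintro rfl; exact hBC subset_rfl)]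

theorem Finset.sum_nonempty_Icc_neg_one_pow_card [Fintype α] (B C : Finset α) :
    ∑ U, (if U.Nonempty ∧ B ⊆ U ∧ U ⊆ C then -(-1 : ℤ) ^ #U else 0) =
      (if B = ∅ then 1 else 0) - if B = C then (-1) ^ #B else 0 := by
  have h : ∀ U : Finset α, (if U.Nonempty ∧ B ⊆ U ∧ U ⊆ C then -(-1 : ℤ) ^ #U else 0) =
      (if U = ∅ then if B = ∅ then 1 else 0 else 0) - if U ∈ Icc B C then (-1) ^ #U else 0 := by
    intro U
    obtain rfl | hU := U.eq_empty_or_nonempty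
    · by_cases hB : B = ∅ <;> simp [hB]
    · simp only [hU, hU.ne_empty, mem_Icc, true_and, if_false, zero_sub]
      split_ifs <;> simp
  simp_rw [h, sum_sub_distrib, sum_ite_eq', sum_ite_mem, univ_inter, sum_Icc_neg_one_pow_card]
  simp

end SignedSubsetSums

section TransferMatrix

variable (α : Type*) [DecidableEq α]

def transferMatrix : Matrix (Finset α) (Finset α) ℤ :=
  of fun S T => if S.Nonempty ∧ T.Nonempty ∧ Disjoint S T then -(-1) ^ #T else 0

variable {α} in
@[simp]
theorem transferMatrix_apply (S T : Finset α) :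
    transferMatrix α S T = if S.Nonempty ∧ T.Nonempty ∧ Disjoint S T then -(-1) ^ #T else 0 :=
  rfl

variable [Fintype α]

def properIndicator (S : Finset α) : ℤ := if S.Nonempty ∧ S ≠ univ then 1 else 0

def signedProperIndicator (S : Finset α) : ℤ :=
  if S.Nonempty ∧ S ≠ univ then -(-1) ^ #S else 0

variable {α}

theorem transferMatrix_sq_apply (S T : Finset α) :
    (transferMatrix α ^ 2) S T =
      if S.Nonempty ∧ T.Nonempty ∧ ¬Sᶜ ⊆ T then -(-1) ^ #T else 0 := by
  have h : ∀ U, transferMatrix α S U * transferMatrix α U T =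
      (if U.Nonempty ∧ ∅ ⊆ U ∧ U ⊆ Sᶜ \ T then -(-1) ^ #U else 0) *
        if S.Nonempty ∧ T.Nonempty then -(-1) ^ #T else 0 := by
    intro U
    simp only [transferMatrix_apply, subset_sdiff, subset_compl_iff_disjoint_right,
      empty_subset, true_and, disjoint_comm (a := U) (b := S)]
    split_ifs <;> simp_all
  rw [sq, mul_apply, sum_congr rfl fun U _ => h U, ← sum_mul, sum_nonempty_Icc_neg_one_pow_card]
  simp only [eq_comm (a := ∅), sdiff_eq_empty_iff_subset]
  split_ifs <;> simp_all

theorem transferMatrix_pow_three :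
    transferMatrix α ^ 3 = (-(-1) ^ Fintype.card α) • diagonal (properIndicator α) +
      vecMulVec (properIndicator α) (signedProperIndicator α) := by
  ext S T
  have h : ∀ U, (transferMatrix α ^ 2) S U * transferMatrix α U T =
      ((if U.Nonempty ∧ ∅ ⊆ U ∧ U ⊆ Tᶜ then -(-1) ^ #U else 0) -
        (if U.Nonempty ∧ Sᶜ ⊆ U ∧ U ⊆ Tᶜ then -(-1) ^ #U else 0)) *
        if S.Nonempty ∧ T.Nonempty then -(-1) ^ #T else 0 := by
    intro U
    simp only [transferMatrix_apply, transferMatrix_sq_apply, subset_compl_iff_disjoint_right,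
      empty_subset, true_and]
    split_ifs <;> simp_all
  rw [pow_succ, mul_apply, sum_congr rfl fun U _ => h U, ← sum_mul, sum_sub_distrib,
    sum_nonempty_Icc_neg_one_pow_card, sum_nonempty_Icc_neg_one_pow_card]
  clear h
  have hsign : (-1 : ℤ) ^ #Sᶜ * (-1) ^ #S = (-1) ^ Fintype.card α := by
    rw [← pow_add, card_compl_add_card]
  simp only [eq_comm (a := ∅), compl_eq_empty_iff, compl_inj_iff, Matrix.add_apply,
    Matrix.smul_apply, smul_eq_mul, diagonal_apply, vecMulVec_apply, properIndicator,
    signedProperIndicator]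
  by_cases hST : S = T
  · subst hST
    split_ifs <;> simp_all
    linear_combination -hsign
  · split_ifs <;> simp_all

theorem transferMatrix_apply_univ (S : Finset α) : transferMatrix α S univ = 0 := by
  rw [transferMatrix_apply, if_neg]
  rintro ⟨hS, -, hdisj⟩
  exact hS.ne_empty ((disjoint_self_iff_empty S).mp (hdisj.mono_right (subset_univ S)))

theorem transferMatrix_mulVec_properIndicator :
    transferMatrix α *ᵥ properIndicator α = properIndicator α := by
  ext S
  have h : ∀ T, transferMatrix α S T * properIndicator α T =
      (if T.Nonempty ∧ ∅ ⊆ T ∧ T ⊆ Sᶜ then -(-1) ^ #T else 0) *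
        if S.Nonempty then 1 else 0 := by
    intro T
    simp only [transferMatrix_apply, properIndicator, subset_compl_iff_disjoint_right,
      empty_subset, true_and, disjoint_comm (a := T)]
    split_ifs <;> simp_all [disjoint_iff_inter_eq_empty]
  rw [mulVec, dotProduct, sum_congr rfl fun T _ => h T, ← sum_mul,
    sum_nonempty_Icc_neg_one_pow_card]
  simp only [properIndicator, eq_comm (a := ∅), compl_eq_empty_iff]
  split_ifs <;> simp_all

theorem transferMatrix_mul_diagonal_properIndicator :
    transferMatrix α * diagonal (properIndicator α) = transferMatrix α := by
  ext S T
  rw [mul_diagonal]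
  by_cases hT : T = univ
  · rw [hT, transferMatrix_apply_univ, zero_mul]
  · by_cases hne : T.Nonempty <;> simp [properIndicator, hT, hne]

theorem transferMatrix_pow_mulVec_properIndicator (j : ℕ) :
    transferMatrix α ^ j *ᵥ properIndicator α = properIndicator α := by
  induction j with
  | zero => simp
  | succ j ih => rw [pow_succ, ← mulVec_mulVec, transferMatrix_mulVec_properIndicator, ih]

theorem transferMatrix_pow_mul_diagonal_properIndicator {j : ℕ} (hj : j ≠ 0) :
    transferMatrix α ^ j * diagonal (properIndicator α) = transferMatrix α ^ j := by
  obtain ⟨j, rfl⟩ := Nat.exists_eq_succ_of_ne_zero hj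
  rw [pow_succ, mul_assoc, transferMatrix_mul_diagonal_properIndicator]

theorem trace_transferMatrix_pow_add_three {j : ℕ} (hj : j ≠ 0) :
    trace (transferMatrix α ^ (j + 3)) =
      -(-1) ^ Fintype.card α * trace (transferMatrix α ^ j) +
        properIndicator α ⬝ᵥ signedProperIndicator α := by
  rw [pow_add, transferMatrix_pow_three, Matrix.mul_add, Matrix.mul_smul,
    transferMatrix_pow_mul_diagonal_properIndicator hj, mul_vecMulVec,
    transferMatrix_pow_mulVec_properIndicator, trace_add, trace_smul, trace_vecMulVec,
    smul_eq_mul]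

theorem properIndicator_dotProduct_signedProperIndicator [Nonempty α] :
    properIndicator α ⬝ᵥ signedProperIndicator α = 1 + (-1) ^ Fintype.card α := by
  have h : ∀ S, properIndicator α S * signedProperIndicator α S =
      (if S.Nonempty ∧ ∅ ⊆ S ∧ S ⊆ univ then -(-1) ^ #S else 0) -
        if S = univ then -(-1) ^ Fintype.card α else 0 := by
    intro S
    by_cases hS : S = univ <;> by_cases hne : S.Nonempty <;>
      simp [hS, hne, properIndicator, signedProperIndicator]
  rw [dotProduct, sum_congr rfl fun S _ => h S, sum_sub_distrib,
    sum_nonempty_Icc_neg_one_pow_card, sum_ite_eq']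
  simp [univ_nonempty.ne_empty.symm]

theorem sum_properIndicator [Nonempty α] :
    ∑ S, properIndicator α S = 2 ^ Fintype.card α - 2 := by
  have h : ∀ S, properIndicator α S =
      1 - (if S = ∅ then 1 else 0) - if S = univ then 1 else 0 := by
    intro S
    obtain rfl | hS := S.eq_empty_or_nonempty
    · simp [properIndicator, univ_nonempty.ne_empty.symm]
    · by_cases hSu : S = univ <;>
        simp [properIndicator, hS, hS.ne_empty, hSu, univ_nonempty.ne_empty]
  simp [sum_congr rfl fun S _ => h S, sum_sub_distrib, Fintype.card_finset]
  ring

theorem trace_transferMatrix : trace (transferMatrix α) = 0 := by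
  simp [trace, nonempty_iff_ne_empty]

theorem trace_transferMatrix_sq :
    trace (transferMatrix α ^ 2) = properIndicator α ⬝ᵥ signedProperIndicator α := by
  refine sum_congr rfl fun S _ => ?_
  simp only [diag_apply, transferMatrix_sq_apply, properIndicator, signedProperIndicator]
  split_ifs <;> simp_all

theorem trace_transferMatrix_pow_three [Nonempty α] :
    trace (transferMatrix α ^ 3) = -(-1) ^ Fintype.card α * (2 ^ Fintype.card α - 2) +
      properIndicator α ⬝ᵥ signedProperIndicator α := by
  rw [transferMatrix_pow_three, trace_add, trace_smul, trace_diagonal, trace_vecMulVec,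
    sum_properIndicator, smul_eq_mul]

theorem trace_transferMatrix_pow_sub_one [Nonempty α] :
    ∀ m ≠ 0, trace (transferMatrix α ^ m) - 1 =
      (-1) ^ (Fintype.card α * ((m + 1) / 3) + m) *
        if 3 ∣ m then 2 ^ Fintype.card α - 3 else 1
  | 1, _ => by simp [trace_transferMatrix]
  | 2, _ => by
    rw [trace_transferMatrix_sq, properIndicator_dotProduct_signedProperIndicator]
    norm_num
    ring
  | 3, _ => by
    rw [trace_transferMatrix_pow_three, properIndicator_dotProduct_signedProperIndicator]
    norm_num
    ring
  | m + 4, _ => by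
    have ih := trace_transferMatrix_pow_sub_one (m + 1) (by omega)
    have hq : (m + 4 + 1) / 3 = (m + 1 + 1) / 3 + 1 := by omega
    have hdvd : 3 ∣ m + 4 ↔ 3 ∣ m + 1 := by omega
    rw [trace_transferMatrix_pow_add_three (by omega : m + 1 ≠ 0),
      properIndicator_dotProduct_signedProperIndicator, hq, if_congr hdvd rfl rfl]
    linear_combination -(-1) ^ Fintype.card α * ih

end TransferMatrix

section HomCycle

variable {α : Type*} [DecidableEq α]

theorem prod_transferMatrix_eq_ite {m : ℕ} [NeZero m] (η : ZMod m → Finset α) :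
    ∏ i, transferMatrix α (η i) (η (i + 1)) =
      if (∀ i, η i ≠ ∅) ∧ ∀ i, η i ∩ η (i + 1) = ∅ then (-1) ^ ((∑ i, #(η i)) - m) else 0 := by
  split_ifs with h
  · obtain ⟨hne, hdisj⟩ := h
    have hfactor : ∀ i, transferMatrix α (η i) (η (i + 1)) = (-1) ^ (#(η (i + 1)) + 1) :=
      fun i => by
        rw [transferMatrix_apply, if_pos ⟨nonempty_iff_ne_empty.mpr (hne i),
          nonempty_iff_ne_empty.mpr (hne (i + 1)), disjoint_iff_inter_eq_empty.mpr (hdisj i)⟩,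
          pow_succ, mul_neg_one]
    have hm : m ≤ ∑ i, #(η i) := calc
      m = ∑ _i : ZMod m, 1 := by simp
      _ ≤ ∑ i, #(η i) := sum_le_sum fun i _ => card_pos.mpr (nonempty_iff_ne_empty.mpr (hne i))
    have hexp : ∑ i, (#(η i) + 1) = (∑ i, #(η i) - m) + 2 * m := by
      rw [sum_add_distrib]
      simp only [sum_const, card_univ, ZMod.card, smul_eq_mul, mul_one]
      omega
    rw [prod_congr rfl fun i _ => hfactor i,
      Fintype.prod_equiv (Equiv.addRight 1) (fun i => (-1 : ℤ) ^ (#(η (i + 1)) + 1))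
        (fun i => (-1) ^ (#(η i) + 1)) fun _ => rfl,
      prod_pow_eq_pow_sum, hexp, pow_add, pow_mul, neg_one_sq, one_pow, mul_one]
  · rw [not_and_or, not_forall, not_forall] at h
    obtain ⟨i, hi⟩ | ⟨i, hi⟩ := h <;> refine prod_eq_zero (mem_univ i) (if_neg ?_)
    · exact fun h => hi h.1.ne_empty
    · exact fun h => hi (disjoint_iff_inter_eq_empty.mp h.2.2)

theorem sum_homCells_eq_trace_transferMatrix_pow [Fintype α] (m : ℕ) [NeZero m] :
    ∑ η ∈ univ.filter (fun η : ZMod m → Finset α =>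
        (∀ i, η i ≠ ∅) ∧ ∀ i, η i ∩ η (i + 1) = ∅),
      (-1 : ℤ) ^ ((∑ i, #(η i)) - m) = trace (transferMatrix α ^ m) := by
  rw [trace_pow_eq_sum_prod, sum_filter]
  exact sum_congr rfl fun η _ => (prod_transferMatrix_eq_ite η).symm

end HomCycle

theorem cohomology_of_colorings_of_cycles_stmt3_general
    (m n : ℕ) [NeZero m] (hn : 4 ≤ n) :
    (∑ η ∈ Finset.univ.filter (fun η : ZMod m → Finset (Fin n) =>
        (∀ i, η i ≠ ∅) ∧ ∀ i, η i ∩ η (i + 1) = ∅),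
      (-1 : ℤ) ^ ((∑ i, (η i).card) - m)) - 1
    = if 3 ∣ m then (-1 : ℤ) ^ (n * ((m + 1) / 3) + m) * (2 ^ n - 3)
      else (-1 : ℤ) ^ (n * ((m + 1) / 3) + m) := by
  have : Nonempty (Fin n) := ⟨⟨0, by omega⟩⟩
  rw [sum_homCells_eq_trace_transferMatrix_pow, trace_transferMatrix_pow_sub_one m (NeZero.ne m),
    Fintype.card_fin, mul_ite, mul_one]

/-- **Euler characteristic of `Hom(C_m,K_n)` (Corollary 6.4 / `crl:chi2`).**
For `m ≥ 5`, `n ≥ 4` and `k = ⌊(m+1)/3⌋`,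
`χ̃(Hom(C_m,K_n)) = (−1)^{nk−m}(2^n−3)` if `3 ∣ m`, and `(−1)^{nk−m}` otherwise.
The cells of `Hom(C_m,K_n)` are indexed by functions `η : ZMod m → Finset (Fin n)`
with nonempty values which are disjoint on cyclically adjacent vertices. -/
theorem cohomology_of_colorings_of_cycles_stmt3
    (m n : ℕ) [NeZero m] (hm : 5 ≤ m) (hn : 4 ≤ n) :
    (∑ η ∈ Finset.univ.filter (fun η : ZMod m → Finset (Fin n) =>
        (∀ i, η i ≠ ∅) ∧ ∀ i, η i ∩ η (i + 1) = ∅),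
      (-1 : ℤ) ^ ((∑ i, (η i).card) - m)) - 1
    = if 3 ∣ m then (-1 : ℤ) ^ (n * ((m + 1) / 3) + m) * (2 ^ n - 3)
      else (-1 : ℤ) ^ (n * ((m + 1) / 3) + m) :=
  cohomology_of_colorings_of_cycles_stmt3_general m n hn
end

section
/- Let T and G be finite simple graphs with vertex sets V and W. A finite set σ ⊆ V × W is a face of Hom₊(T,G), i.e., for all (x,a), (y,b) ∈ σ, if x and y are adjacent in T then a and b are adjacent in G, if and only if σ is an independent set of the graph H on vertex set V × W in which (x,a) and (y,b) are adjacent exactly when x and y are adjacent in T and a and b are NOT adjacent in G (the case a = b included). In other words, Hom₊(T,G) is isomorphic to the independence complex Ind(T × ∁G), where ∁G is the strong complement of G. -/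
/-- The graph `T × ∁G` on the vertex set `V × W`: `(x,a)` and `(y,b)` are adjacent
iff `x` and `y` are adjacent in `T` while `a` and `b` are NOT adjacent in `G`
(the case `a = b` included). This is the categorical product of `T` with the
strong complement of `G`. -/
def strongComplementProd {V W : Type*} (T : SimpleGraph V) (G : SimpleGraph W) :
    SimpleGraph (V × W) where
  Adj p q := T.Adj p.1 q.1 ∧ ¬ G.Adj p.2 q.2
  symm := by
    constructor
    rintro p q ⟨h1, h2⟩
    exact ⟨h1.symm, fun h => h2 h.symm⟩
  loopless := by
    constructor
    rintro p ⟨h1, -⟩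
    exact T.loopless.irrefl _ h1

@[simp]
theorem strongComplementProd_adj {V W : Type*} (T : SimpleGraph V) (G : SimpleGraph W)
    (p q : V × W) :
    (strongComplementProd T G).Adj p q ↔ T.Adj p.1 q.1 ∧ ¬ G.Adj p.2 q.2 :=
  Iff.rfl

/-- **`Hom₊(T,G) ≅ Ind(T × ∁G)` (Proposition 2.4 / `pr:homp`).**
A finite set `σ ⊆ V × W` is a face of `Hom₊(T,G)` if and only if it is
an independent set of the graph `T × ∁G`. -/
theorem cohomology_of_colorings_of_cycles_stmt5
    {V W : Type*} (T : SimpleGraph V) (G : SimpleGraph W)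
    (σ : Finset (V × W)) :
    (∀ p ∈ σ, ∀ q ∈ σ, T.Adj p.1 q.1 → G.Adj p.2 q.2) ↔
    (∀ p ∈ σ, ∀ q ∈ σ, ¬ (strongComplementProd T G).Adj p q) := by
  simp only [strongComplementProd_adj, not_and, not_not]
end

section
/- Let m ≥ 3 and set k = ⌊(m+1)/3⌋. Then Σ over all subsets I ⊆ ZMod m containing no two cyclically consecutive elements (i.e., there is no i with both i ∈ I and i+1 ∈ I), of (−1)^{card I}, equals 2·(−1)^k if 3 divides m, and (−1)^k otherwise. (Equivalently, the reduced Euler characteristic of the independence complex Ind(C_m) equals 2(−1)^{k−1} if m = 3k and (−1)^{k−1} if m = 3k±1, consistent with Ind(C_m) ≃ S^{k−1} ∨ S^{k−1} resp. S^{k−1}.) -/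
/-!
Write `P n` for the signed count `∑ (-1)^|I|` of the independent sets of the path on `n`
vertices. Splitting the independent sets of a graph according to whether they contain a vertex
`v` gives `I(G) = I(G - v) - I(G - N[v])` for this signed count. On paths this is
`P (n + 2) = P (n + 1) - P n`, so `P` is the 6-periodic sequence `1, 0, -1, -1, 0, 1, …`;
on the cycle `C_m` it gives `P (m - 1) - P (m - 3)`, which agrees with the claimed value for
`m < 9`, and both sides are 6-periodic in `m`.
-/

open Finset

section SignedIndepCount

variable {α β : Type*}

def indepSubsets (r : α → α → Prop) [DecidableRel r] (s : Finset α) : Finset (Finset α) :=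
  {J ∈ s.powerset | ∀ i ∈ J, ∀ j ∈ J, ¬ r i j}

/-- The independence polynomial at `-1`, i.e. minus the reduced Euler characteristic of the
independence complex. -/
def signedIndepCount (r : α → α → Prop) [DecidableRel r] (s : Finset α) : ℤ :=
  ∑ J ∈ indepSubsets r s, (-1) ^ J.card

theorem signedIndepCount_empty (r : α → α → Prop) [DecidableRel r] :
    signedIndepCount r ∅ = 1 := by
  simp [signedIndepCount, indepSubsets, filter_singleton]

theorem filter_notMem_indepSubsets [DecidableEq α] (r : α → α → Prop) [DecidableRel r]
    (s : Finset α) (a : α) :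
    {J ∈ indepSubsets r s | a ∉ J} = indepSubsets r (s.erase a) := by
  ext J
  simp only [indepSubsets, mem_filter, mem_powerset, subset_erase]
  tauto

theorem filter_mem_indepSubsets [DecidableEq α] {r : α → α → Prop} [DecidableRel r]
    {s : Finset α} {a : α} (ha : a ∈ s) (hr : ¬ r a a) :
    {J ∈ indepSubsets r s | a ∈ J} =
      (indepSubsets r {b ∈ s | b ≠ a ∧ ¬ r a b ∧ ¬ r b a}).image (insert a) := by
  ext J
  simp only [indepSubsets, mem_filter, mem_powerset, mem_image]
  constructor
  · rintro ⟨⟨hJs, hJ⟩, haJ⟩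
    refine ⟨J.erase a, ⟨fun b hb => ?_, fun i hi j hj =>
      hJ i (mem_of_mem_erase hi) j (mem_of_mem_erase hj)⟩, insert_erase haJ⟩
    have hbJ := mem_of_mem_erase hb
    exact mem_filter.2 ⟨hJs hbJ, ne_of_mem_erase hb, hJ a haJ b hbJ, hJ b hbJ a haJ⟩
  · rintro ⟨J, ⟨hJs, hJ⟩, rfl⟩
    have hJs' : ∀ b ∈ J, b ∈ s ∧ b ≠ a ∧ ¬ r a b ∧ ¬ r b a := fun b hb => mem_filter.1 (hJs hb)
    refine ⟨⟨insert_subset ha fun b hb => (hJs' b hb).1, ?_⟩, mem_insert_self a J⟩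
    simp only [mem_insert, forall_eq_or_imp]
    exact ⟨⟨hr, fun j hj => (hJs' j hj).2.2.1⟩, fun i hi => ⟨(hJs' i hi).2.2.2, hJ i hi⟩⟩

theorem signedIndepCount_eq_sub [DecidableEq α] {r : α → α → Prop} [DecidableRel r]
    {s : Finset α} {a : α} (ha : a ∈ s) (hr : ¬ r a a) :
    signedIndepCount r s = signedIndepCount r (s.erase a) -
      signedIndepCount r {b ∈ s | b ≠ a ∧ ¬ r a b ∧ ¬ r b a} := by
  have hnotMem : ∀ J ∈ indepSubsets r {b ∈ s | b ≠ a ∧ ¬ r a b ∧ ¬ r b a}, a ∉ J :=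
    fun J hJ haJ => (mem_filter.1 (mem_powerset.1 (mem_filter.1 hJ).1 haJ)).2.1 rfl
  rw [signedIndepCount, ← sum_filter_not_add_sum_filter _ (a ∈ ·),
    filter_notMem_indepSubsets, filter_mem_indepSubsets ha hr,
    sum_image fun J hJ J' hJ' h => by
      rw [← erase_insert (hnotMem J hJ), h, erase_insert (hnotMem J' hJ')],
    sub_eq_add_neg, signedIndepCount, signedIndepCount, ← sum_neg_distrib]
  congr 1
  exact sum_congr rfl fun J hJ => by
    rw [card_insert_of_notMem (hnotMem J hJ), pow_succ, mul_neg_one]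

theorem signedIndepCount_image [DecidableEq β] {r : β → β → Prop} {r' : α → α → Prop}
    [DecidableRel r] [DecidableRel r'] {s : Finset α} {f : α → β}
    (hf : Set.InjOn f s) (hr : ∀ a ∈ s, ∀ b ∈ s, r (f a) (f b) ↔ r' a b) :
    signedIndepCount r (s.image f) = signedIndepCount r' s := by
  have himage : indepSubsets r (s.image f) = (indepSubsets r' s).image (image f) := by
    rw [indepSubsets, indepSubsets, powerset_image, filter_image]
    congr 1
    refine filter_congr fun J hJ => ?_
    have hJs := mem_powerset.1 hJ
    simp only [forall_mem_image]
    exact forall₂_congr fun i hi => forall₂_congr fun j hj => not_congr (hr i (hJs hi) j (hJs hj))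
  have hsub : ∀ {J}, J ∈ indepSubsets r' s → J ⊆ s := fun hJ => mem_powerset.1 (mem_filter.1 hJ).1
  rw [signedIndepCount, himage, sum_image, signedIndepCount]
  · exact sum_congr rfl fun J hJ => by
      rw [card_image_of_injOn (hf.mono (coe_subset.2 (hsub hJ)))]
  · intro J hJ J' hJ' h
    rw [← coe_inj] at h ⊢
    exact (hf.image_eq_image_iff (coe_subset.2 (hsub hJ)) (coe_subset.2 (hsub hJ'))).1
      (by simpa using h)

end SignedIndepCount

def pathSignedCount : ℕ → ℤ
  | 0 => 1
  | 1 => 0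
  | n + 2 => pathSignedCount (n + 1) - pathSignedCount n

theorem pathSignedCount_succ :
    ∀ n, pathSignedCount (n + 1) = pathSignedCount n - pathSignedCount (n - 1)
  | 0 => rfl
  | _ + 1 => rfl

theorem pathSignedCount_add_six (n : ℕ) : pathSignedCount (n + 6) = pathSignedCount n := by
  simp [pathSignedCount]

theorem signedIndepCount_Ico {r : ℕ → ℕ → Prop} [DecidableRel r] {a b : ℕ}
    (hr : ∀ i ∈ Ico a b, ∀ j ∈ Ico a b, r i j ↔ j = i + 1) :
    signedIndepCount r (Ico a b) = pathSignedCount (b - a) := by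
  induction b using Nat.strong_induction_on with
  | _ b ih =>
    rcases le_or_gt b a with hba | hab
    · rw [Ico_eq_empty_of_le hba, Nat.sub_eq_zero_of_le hba, signedIndepCount_empty]
      rfl
    have hrestrict : ∀ c ≤ b, ∀ i ∈ Ico a c, ∀ j ∈ Ico a c, r i j ↔ j = i + 1 :=
      fun c hc i hi j hj => hr i (Ico_subset_Ico_right hc hi) j (Ico_subset_Ico_right hc hj)
    have ht : b - 1 ∈ Ico a b := mem_Ico.2 ⟨by omega, by omega⟩
    have herase : (Ico a b).erase (b - 1) = Ico a (b - 1) := by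
      ext x; simp only [mem_erase, mem_Ico]; omega
    have hfilter :
        {x ∈ Ico a b | x ≠ b - 1 ∧ ¬ r (b - 1) x ∧ ¬ r x (b - 1)} = Ico a (b - 2) := by
      ext x
      by_cases hx : x ∈ Ico a b
      · simp only [mem_filter, hx, true_and, hr _ ht _ hx, hr _ hx _ ht]
        simp only [mem_Ico] at hx ⊢
        omega
      · simp only [mem_filter, hx, false_and, false_iff]
        simp only [mem_Ico] at hx ⊢
        omega
    rw [signedIndepCount_eq_sub ht (by rw [hr _ ht _ ht]; omega), herase, hfilter,
      ih _ (by omega) (hrestrict _ (by omega)), ih _ (by omega) (hrestrict _ (by omega)),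
      show b - a = b - 1 - a + 1 by omega, pathSignedCount_succ,
      show b - 2 - a = b - 1 - a - 1 by omega]

def cycleRel (m i j : ℕ) : Prop := j = i + 1 ∨ i + 1 = m ∧ j = 0

instance (m : ℕ) : DecidableRel (cycleRel m) := fun _ _ => inferInstanceAs (Decidable (_ ∨ _))

theorem natCast_eq_natCast_add_one_iff {m i j : ℕ} (hi : i < m) (hj : j < m) :
    (j : ZMod m) = i + 1 ↔ cycleRel m i j := by
  rw [← Nat.cast_succ, ZMod.natCast_eq_natCast_iff', Nat.mod_eq_of_lt hj, cycleRel]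
  rcases (Nat.succ_le_of_lt hi).lt_or_eq with h | h
  · rw [Nat.mod_eq_of_lt h]; omega
  · rw [h, Nat.mod_self]; omega

theorem image_natCast_range_eq_univ (m : ℕ) [NeZero m] :
    (range m).image (Nat.cast : ℕ → ZMod m) = univ :=
  eq_univ_of_forall fun x => mem_image.2 ⟨x.val, mem_range.2 x.val_lt, x.natCast_zmod_val⟩

theorem signedIndepCount_zmod_eq_cycleRel (m : ℕ) [NeZero m] :
    signedIndepCount (fun i j : ZMod m => j = i + 1) univ =
      signedIndepCount (cycleRel m) (range m) := by
  rw [← image_natCast_range_eq_univ]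
  refine signedIndepCount_image (fun i hi j hj h => ?_) fun i hi j hj =>
    natCast_eq_natCast_add_one_iff (mem_range.1 hi) (mem_range.1 hj)
  rwa [ZMod.natCast_eq_natCast_iff', Nat.mod_eq_of_lt (mem_range.1 hi),
    Nat.mod_eq_of_lt (mem_range.1 hj)] at h

theorem signedIndepCount_cycleRel {m : ℕ} (hm : 3 ≤ m) :
    signedIndepCount (cycleRel m) (range m) =
      pathSignedCount (m - 1) - pathSignedCount (m - 3) := by
  have ht : m - 1 ∈ range m := mem_range.2 (by omega)
  have herase : (range m).erase (m - 1) = Ico 0 (m - 1) := by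
    ext x; simp only [mem_erase, mem_range, mem_Ico]; omega
  have hfilter :
      {x ∈ range m | x ≠ m - 1 ∧ ¬ cycleRel m (m - 1) x ∧ ¬ cycleRel m x (m - 1)} =
        Ico 1 (m - 2) := by
    ext x
    simp only [mem_filter, mem_range, mem_Ico]
    unfold cycleRel
    omega
  rw [signedIndepCount_eq_sub ht (by simp only [cycleRel]; omega), herase, hfilter,
    signedIndepCount_Ico, signedIndepCount_Ico, show m - 2 - 1 = m - 3 by omega, Nat.sub_zero] <;>
  · intro i hi j hj
    simp only [mem_Ico, cycleRel] at hi hj ⊢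
    omega

theorem pathSignedCount_sub_one_sub_pathSignedCount_sub_three {m : ℕ} (hm : 3 ≤ m) :
    pathSignedCount (m - 1) - pathSignedCount (m - 3) =
      if 3 ∣ m then 2 * (-1 : ℤ) ^ ((m + 1) / 3) else (-1 : ℤ) ^ ((m + 1) / 3) := by
  induction m using Nat.strong_induction_on with
  | _ m ih =>
    by_cases hsmall : m < 9
    · interval_cases m <;> decide
    obtain ⟨k, rfl⟩ : ∃ k, m = k + 6 := ⟨m - 6, by omega⟩
    rw [show k + 6 - 1 = k - 1 + 6 by omega, show k + 6 - 3 = k - 3 + 6 by omega,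
      pathSignedCount_add_six, pathSignedCount_add_six, ih k (by omega) (by omega),
      show (k + 6 + 1) / 3 = (k + 1) / 3 + 2 by omega, pow_add]
    simp only [show 3 ∣ k + 6 ↔ 3 ∣ k by omega]
    split_ifs <;> ring

/-- **Reduced Euler characteristic of `Ind(C_m)` (from Proposition 2.6).**
For `m ≥ 3` and `k = ⌊(m+1)/3⌋`, the sum of `(−1)^{|I|}` over all subsets
`I ⊆ ZMod m` with no two cyclically consecutive elements equals `2(−1)^k`
if `3 ∣ m` and `(−1)^k` otherwise. -/
theorem cohomology_of_colorings_of_cycles_stmt8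
    (m : ℕ) [NeZero m] (hm : 3 ≤ m) :
    ∑ I ∈ Finset.univ.filter (fun I : Finset (ZMod m) => ∀ i ∈ I, i + 1 ∉ I),
      (-1 : ℤ) ^ I.card
    = if 3 ∣ m then 2 * (-1 : ℤ) ^ ((m + 1) / 3) else (-1 : ℤ) ^ ((m + 1) / 3) := by
  have hindep : Finset.univ.filter (fun I : Finset (ZMod m) => ∀ i ∈ I, i + 1 ∉ I) =
      indepSubsets (fun i j => j = i + 1) univ := by
    rw [indepSubsets, powerset_univ]
    ext I
    simp
  rw [hindep, ← signedIndepCount, signedIndepCount_zmod_eq_cycleRel,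
    signedIndepCount_cycleRel hm, pathSignedCount_sub_one_sub_pathSignedCount_sub_three hm]
end

section
/- Let m ≥ 3, n ≥ 1 and set k = ⌊(m+1)/3⌋. Then Σ over all functions η : ZMod m → Finset(Fin n) satisfying η i ∩ η(i+1) = ∅ for every i ∈ ZMod m (the zero function included), of (−1)^{Σ_i card(η i)}, equals 2^n·(−1)^{n·k} if 3 divides m, and (−1)^{n·k} otherwise. (This sum equals −χ̃(Hom₊(C_m,K_n)), consistent with the homotopy equivalence of Hom₊(C_m,K_n) with a wedge of 2^n spheres S^{nk−1} when m = 3k, and with a single sphere S^{nk−1} when m = 3k±1.) -/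
open Classical

open Finset

set_option linter.unusedSectionVars false

noncomputable def Ppath (l : ℕ) : ℤ :=
  ∑ S ∈ (Finset.range l).powerset.filter (fun S => ∀ i, ¬(i ∈ S ∧ i + 1 ∈ S)),
    (-1 : ℤ) ^ S.card

lemma pth_zero :
    (Finset.range 0).powerset.filter (fun S => ∀ i, ¬(i ∈ S ∧ i + 1 ∈ S)) = {∅} := by
  ext S
  simp only [Finset.mem_filter, Finset.mem_powerset, Finset.range_zero,
    Finset.subset_empty, Finset.mem_singleton]
  constructor
  · rintro ⟨h, -⟩; exact h
  · rintro rfl; simp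

lemma Ppath_zero : Ppath 0 = 1 := by
  rw [Ppath, pth_zero]; simp

lemma pth_one :
    (Finset.range 1).powerset.filter (fun S => ∀ i, ¬(i ∈ S ∧ i + 1 ∈ S)) = {∅, {0}} := by
  ext S
  simp only [Finset.mem_filter, Finset.mem_powerset, Finset.range_one,
    Finset.subset_singleton_iff, Finset.mem_insert, Finset.mem_singleton]
  constructor
  · rintro ⟨h, -⟩; exact h
  · rintro (rfl | rfl)
    · simp
    · refine ⟨Or.inr rfl, fun i hi => ?_⟩
      simp only [Finset.mem_singleton] at hi
      omega

lemma Ppath_one : Ppath 1 = 0 := by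
  rw [Ppath, pth_one]
  rw [Finset.sum_pair (by decide : (∅ : Finset ℕ) ≠ {0})]
  simp

noncomputable def pthF (l : ℕ) : Finset (Finset ℕ) :=
  (Finset.range l).powerset.filter (fun S => ∀ i, ¬(i ∈ S ∧ i + 1 ∈ S))

lemma mem_pthF {l : ℕ} {S : Finset ℕ} :
    S ∈ pthF l ↔ S ⊆ Finset.range l ∧ ∀ i, ¬(i ∈ S ∧ i + 1 ∈ S) := by
  simp [pthF]

lemma Ppath_eq (l : ℕ) : Ppath l = ∑ S ∈ pthF l, (-1 : ℤ) ^ S.card := rfl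

lemma Ppath_rec (l : ℕ) : Ppath (l + 2) = Ppath (l + 1) - Ppath l := by
  have hsplit := Finset.sum_filter_add_sum_filter_not (pthF (l + 2))
    (fun S => (l + 1) ∈ S) (fun S => (-1 : ℤ) ^ S.card)
  have h1 : (pthF (l + 2)).filter (fun S => (l + 1) ∉ S) = pthF (l + 1) := by
    ext S
    simp only [Finset.mem_filter, mem_pthF, Finset.mem_range]
    constructor
    · rintro ⟨⟨hsub, hcond⟩, hnot⟩
      refine ⟨fun x hx => ?_, hcond⟩
      have := hsub hx
      simp only [Finset.mem_range] at this ⊢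
      rcases Nat.lt_or_ge x (l + 1) with h | h
      · exact h
      · exfalso; apply hnot
        have : x = l + 1 := by omega
        rwa [this] at hx
    · rintro ⟨hsub, hcond⟩
      refine ⟨⟨hsub.trans (by intro x; simp only [Finset.mem_range]; omega), hcond⟩, ?_⟩
      intro hmem
      have := hsub hmem
      simp only [Finset.mem_range] at this
      omega
  have h2 : ∑ S ∈ (pthF (l + 2)).filter (fun S => (l + 1) ∈ S), (-1 : ℤ) ^ S.card
      = ∑ T ∈ pthF l, -(-1 : ℤ) ^ T.card := by
    refine Finset.sum_nbij' (i := fun S => S.erase (l + 1)) (j := fun T => insert (l + 1) T)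
      ?_ ?_ ?_ ?_ ?_
    · intro S hS
      simp only [Finset.mem_filter, mem_pthF] at hS
      obtain ⟨⟨hsub, hcond⟩, hmem⟩ := hS
      rw [mem_pthF]
      constructor
      · intro x hx
        simp only [Finset.mem_erase] at hx
        have hx2 := hsub hx.2
        simp only [Finset.mem_range] at hx2 ⊢
        have hxl : x ≠ l := fun h => hcond l ⟨h ▸ hx.2, hmem⟩
        omega
      · intro i hi
        exact hcond i ⟨(Finset.mem_erase.mp hi.1).2, (Finset.mem_erase.mp hi.2).2⟩
    · intro T hT
      rw [mem_pthF] at hT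
      obtain ⟨hsub, hcond⟩ := hT
      have hnotmem : (l + 1) ∉ T := by
        intro h; have := hsub h; simp only [Finset.mem_range] at this; omega
      simp only [Finset.mem_filter, mem_pthF]
      refine ⟨⟨?_, ?_⟩, Finset.mem_insert_self _ _⟩
      · intro x hx
        rcases Finset.mem_insert.mp hx with rfl | hx
        · simp
        · have := hsub hx; simp only [Finset.mem_range] at this ⊢; omega
      · intro i ⟨hi1, hi2⟩
        rcases Finset.mem_insert.mp hi1 with rfl | hi1
        · rcases Finset.mem_insert.mp hi2 with h | h
          · omega
          · have := hsub h; simp only [Finset.mem_range] at this; omega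
        · rcases Finset.mem_insert.mp hi2 with h | h
          · have := hsub hi1; simp only [Finset.mem_range] at this; omega
          · exact hcond i ⟨hi1, h⟩
    · intro S hS
      simp only [Finset.mem_filter] at hS
      exact Finset.insert_erase hS.2
    · intro T hT
      rw [mem_pthF] at hT
      have hnotmem : (l + 1) ∉ T := by
        intro h; have := hT.1 h; simp only [Finset.mem_range] at this; omega
      exact Finset.erase_insert hnotmem
    · intro S hS
      simp only [Finset.mem_filter] at hS
      have : S.card = (S.erase (l + 1)).card + 1 := by
        rw [Finset.card_erase_of_mem hS.2]
        have : 0 < S.card := Finset.card_pos.mpr ⟨l + 1, hS.2⟩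
        omega
      rw [this, pow_succ]
      ring
  rw [Ppath_eq (l + 2), ← hsplit, h2, h1, Finset.sum_neg_distrib, ← Ppath_eq, ← Ppath_eq]
  ring

lemma Ppath_add_three (l : ℕ) : Ppath (l + 3) = -Ppath l := by
  have h1 := Ppath_rec (l + 1)
  have h2 := Ppath_rec l
  have : l + 1 + 2 = l + 3 := by omega
  rw [this] at h1
  have : l + 1 + 1 = l + 2 := by omega
  rw [this] at h1
  omega

lemma Ppath_add_six (l : ℕ) : Ppath (l + 6) = Ppath l := by
  have h1 := Ppath_add_three l
  have h2 := Ppath_add_three (l + 3)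
  have : l + 3 + 3 = l + 6 := by omega
  rw [this] at h2
  omega

lemma Ppath_two : Ppath 2 = -1 := by
  have := Ppath_rec 0; norm_num [Ppath_zero, Ppath_one] at this; omega
lemma Ppath_three : Ppath 3 = -1 := by
  have := Ppath_rec 1; norm_num [Ppath_one, Ppath_two] at this; omega
lemma Ppath_four : Ppath 4 = 0 := by
  have := Ppath_rec 2; norm_num [Ppath_two, Ppath_three] at this; omega
lemma Ppath_five : Ppath 5 = 1 := by
  have := Ppath_rec 3; norm_num [Ppath_three, Ppath_four] at this; omega
lemma Ppath_six : Ppath 6 = 1 := by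
  have := Ppath_rec 4; norm_num [Ppath_four, Ppath_five] at this; omega
lemma Ppath_seven : Ppath 7 = 0 := by
  have := Ppath_rec 5; norm_num [Ppath_five, Ppath_six] at this; omega

lemma key_arith : ∀ m : ℕ, 3 ≤ m →
    Ppath (m - 1) - Ppath (m - 3)
      = if 3 ∣ m then 2 * (-1 : ℤ) ^ ((m + 1) / 3) else (-1 : ℤ) ^ ((m + 1) / 3) := by
  intro m
  induction m using Nat.strong_induction_on with
  | _ m IH =>
    intro hm
    rcases Nat.lt_or_ge m 9 with h9 | h9
    · interval_cases m
      · norm_num [Ppath_two, Ppath_zero]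
      · norm_num [Ppath_three, Ppath_one]
      · norm_num [Ppath_four, Ppath_two]
      · norm_num [Ppath_five, Ppath_three]
      · norm_num [Ppath_six, Ppath_four]
      · norm_num [Ppath_seven, Ppath_five]
    · have hIH := IH (m - 6) (by omega) (by omega)
      have e1 : m - 1 = (m - 6 - 1) + 6 := by omega
      have e2 : m - 3 = (m - 6 - 3) + 6 := by omega
      rw [e1, e2, Ppath_add_six, Ppath_add_six, hIH]
      have hd : (3 ∣ m) ↔ (3 ∣ m - 6) := by omega
      have he : (m + 1) / 3 = (m - 6 + 1) / 3 + 2 := by omega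
      rw [he, pow_add]
      by_cases h3 : 3 ∣ m
      · rw [if_pos (hd.mp h3), if_pos h3]; ring
      · rw [if_neg (fun h => h3 (hd.mpr h)), if_neg h3]; ring

section Cyc

variable (m : ℕ) [NeZero m]

noncomputable def cycF : Finset (Finset (ZMod m)) :=
  Finset.univ.filter (fun S => ∀ i : ZMod m, ¬(i ∈ S ∧ i + 1 ∈ S))

noncomputable def Pcyc : ℤ := ∑ S ∈ cycF m, (-1 : ℤ) ^ S.card

variable {m}

lemma mem_cycF {S : Finset (ZMod m)} :
    S ∈ cycF m ↔ ∀ i : ZMod m, ¬(i ∈ S ∧ i + 1 ∈ S) := by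
  simp [cycF]

lemma natCast_inj' {a b : ℕ} (ha : a < m) (hb : b < m) (h : (a : ZMod m) = b) : a = b := by
  have := congrArg ZMod.val h
  rwa [ZMod.val_cast_of_lt ha, ZMod.val_cast_of_lt hb] at this

lemma natCast_val' (a : ZMod m) : ((a.val : ℕ) : ZMod m) = a :=
  ZMod.natCast_rightInverse a

lemma partA (hm : 3 ≤ m) :
    ∑ S ∈ (cycF m).filter (fun S => (0 : ZMod m) ∉ S), (-1 : ℤ) ^ S.card
      = Ppath (m - 1) := by
  rw [Ppath_eq]
  have hinj : ∀ T : Finset ℕ, T ⊆ Finset.range (m - 1) →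
      (T.image (fun j => ((j + 1 : ℕ) : ZMod m))).card = T.card := by
    intro T hT
    apply Finset.card_image_of_injOn
    intro a ha b hb hab
    have ha' : a + 1 < m := by have := hT ha; simp only [Finset.mem_range] at this; omega
    have hb' : b + 1 < m := by have := hT hb; simp only [Finset.mem_range] at this; omega
    have := natCast_inj' ha' hb' hab
    omega
  have hleft : ∀ S ∈ (cycF m).filter (fun S => (0 : ZMod m) ∉ S),
      ((Finset.range (m - 1)).filter (fun j => (((j + 1 : ℕ) : ZMod m)) ∈ S)).image
        (fun j => ((j + 1 : ℕ) : ZMod m)) = S := by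
    intro S hS
    simp only [Finset.mem_filter, mem_cycF] at hS
    obtain ⟨-, h0⟩ := hS
    ext a
    simp only [Finset.mem_image, Finset.mem_filter, Finset.mem_range]
    constructor
    · rintro ⟨j, ⟨-, hj⟩, rfl⟩; exact hj
    · intro ha
      have hne : a ≠ 0 := fun h => h0 (h ▸ ha)
      have hv : a.val < m := ZMod.val_lt a
      have hv1 : 1 ≤ a.val := by
        rcases Nat.eq_zero_or_pos a.val with h | h
        · exact absurd ((ZMod.val_eq_zero a).mp h) hne
        · exact h
      have hval : a.val - 1 + 1 = a.val := by omega
      refine ⟨a.val - 1, ⟨by omega, ?_⟩, ?_⟩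
      · rw [hval, natCast_val']; exact ha
      · rw [hval, natCast_val']
  refine Finset.sum_nbij'
    (i := fun S => (Finset.range (m - 1)).filter (fun j => (((j + 1 : ℕ) : ZMod m)) ∈ S))
    (j := fun T => T.image (fun j => ((j + 1 : ℕ) : ZMod m))) ?_ ?_ hleft ?_ ?_
  · -- maps into pthF
    intro S hS
    simp only [Finset.mem_filter, mem_cycF] at hS
    obtain ⟨hcond, -⟩ := hS
    rw [mem_pthF]
    refine ⟨Finset.filter_subset _ _, ?_⟩
    rintro j ⟨hj1, hj2⟩
    simp only [Finset.mem_filter, Finset.mem_range] at hj1 hj2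
    apply hcond ((j + 1 : ℕ) : ZMod m)
    refine ⟨hj1.2, ?_⟩
    have : ((j + 1 + 1 : ℕ) : ZMod m) = ((j + 1 : ℕ) : ZMod m) + 1 := by push_cast; ring
    rw [← this]
    exact hj2.2
  · -- j maps into the cyc filter
    intro T hT
    rw [mem_pthF] at hT
    obtain ⟨hsub, hcond⟩ := hT
    have hlt : ∀ a ∈ T, a + 1 < m := by
      intro a ha; have := hsub ha; simp only [Finset.mem_range] at this; omega
    simp only [Finset.mem_filter, mem_cycF]
    constructor
    · rintro i ⟨hi1, hi2⟩
      simp only [Finset.mem_image] at hi1 hi2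
      obtain ⟨a, ha, rfl⟩ := hi1
      obtain ⟨b, hb, hba⟩ := hi2
      have hb' := hlt b hb
      have ha' := hlt a ha
      have : ((b + 1 : ℕ) : ZMod m) = ((a + 2 : ℕ) : ZMod m) := by
        rw [hba]; push_cast; ring
      rcases Nat.lt_or_ge (a + 2) m with h2 | h2
      · have := natCast_inj' hb' h2 this
        have hb2 : b = a + 1 := by omega
        exact hcond a ⟨ha, hb2 ▸ hb⟩
      · have ha2 : a + 2 = m := by omega
        rw [ha2] at this
        simp only [ZMod.natCast_self] at this
        have : b + 1 = 0 := by
          have h0 : ((b + 1 : ℕ) : ZMod m) = ((0 : ℕ) : ZMod m) := by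
            rw [this]; simp
          exact natCast_inj' hb' (by omega) h0
        omega
    · -- 0 ∉ image
      simp only [Finset.mem_image, not_exists]
      rintro a ⟨ha, hq⟩
      have ha' := hlt a ha
      have : a + 1 = 0 := natCast_inj' ha' (by omega)
        (by rw [hq]; simp)
      omega
  · -- right inverse
    intro T hT
    rw [mem_pthF] at hT
    obtain ⟨hsub, -⟩ := hT
    ext k
    simp only [Finset.mem_filter, Finset.mem_range, Finset.mem_image]
    constructor
    · rintro ⟨hk, b, hb, hbk⟩
      have hb' : b + 1 < m := by have := hsub hb; simp only [Finset.mem_range] at this; omega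
      have := natCast_inj' hb' (by omega) hbk
      have : b = k := by omega
      exact this ▸ hb
    · intro hk
      have := hsub hk
      simp only [Finset.mem_range] at this
      exact ⟨this, k, hk, rfl⟩
  · -- weights
    intro S hS
    congr 1
    have h1 := hleft S hS
    simp only [Finset.mem_filter] at hS
    conv_lhs => rw [← h1]
    rw [hinj _ (Finset.filter_subset _ _)]

lemma val_bounds {S : Finset (ZMod m)} (hm : 3 ≤ m)
    (hcond : ∀ i : ZMod m, ¬(i ∈ S ∧ i + 1 ∈ S)) (h0 : (0 : ZMod m) ∈ S)
    {a : ZMod m} (ha : a ∈ S) (hne : a ≠ 0) : 2 ≤ a.val ∧ a.val ≤ m - 2 := by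
  have hv : a.val < m := ZMod.val_lt a
  have hv1 : 1 ≤ a.val := by
    rcases Nat.eq_zero_or_pos a.val with h | h
    · exact absurd ((ZMod.val_eq_zero a).mp h) hne
    · exact h
  constructor
  · rcases Nat.lt_or_ge a.val 2 with h | h
    · exfalso
      have hval1 : a.val = 1 := by omega
      have : a = (0 : ZMod m) + 1 := by
        rw [← natCast_val' a, hval1]; simp
      exact hcond 0 ⟨h0, this ▸ ha⟩
    · exact h
  · rcases Nat.lt_or_ge a.val (m - 1) with h | h
    · omega
    · exfalso
      have hval : a.val = m - 1 := by omega
      have : a + 1 = 0 := by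
        rw [← natCast_val' a, hval]
        have : ((m - 1 : ℕ) : ZMod m) + 1 = ((m - 1 + 1 : ℕ) : ZMod m) := by push_cast; ring
        rw [this, show m - 1 + 1 = m by omega, ZMod.natCast_self]
      exact hcond a ⟨ha, this ▸ h0⟩

lemma partB (hm : 3 ≤ m) :
    ∑ S ∈ (cycF m).filter (fun S => (0 : ZMod m) ∈ S), (-1 : ℤ) ^ S.card
      = -Ppath (m - 3) := by
  rw [Ppath_eq, ← Finset.sum_neg_distrib]
  have hcast : ∀ a : ℕ, a + 2 < m → ((a + 2 : ℕ) : ZMod m) ≠ 0 := by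
    intro a ha h
    have : a + 2 = 0 := natCast_inj' ha (by omega) (by rw [h]; simp)
    omega
  have hinj : ∀ T : Finset ℕ, T ⊆ Finset.range (m - 3) →
      (T.image (fun j => ((j + 2 : ℕ) : ZMod m))).card = T.card := by
    intro T hT
    apply Finset.card_image_of_injOn
    intro a ha b hb hab
    have ha' : a + 2 < m := by have := hT ha; simp only [Finset.mem_range] at this; omega
    have hb' : b + 2 < m := by have := hT hb; simp only [Finset.mem_range] at this; omega
    have := natCast_inj' ha' hb' hab
    omega
  have h0im : ∀ T : Finset ℕ, T ⊆ Finset.range (m - 3) →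
      (0 : ZMod m) ∉ T.image (fun j => ((j + 2 : ℕ) : ZMod m)) := by
    intro T hT h
    simp only [Finset.mem_image] at h
    obtain ⟨a, ha, hq⟩ := h
    have ha' : a + 2 < m := by have := hT ha; simp only [Finset.mem_range] at this; omega
    exact hcast a ha' hq
  have hleft : ∀ S ∈ (cycF m).filter (fun S => (0 : ZMod m) ∈ S),
      insert (0 : ZMod m) (((Finset.range (m - 3)).filter
          (fun j => (((j + 2 : ℕ) : ZMod m)) ∈ S)).image (fun j => ((j + 2 : ℕ) : ZMod m))) = S := by
    intro S hS
    simp only [Finset.mem_filter, mem_cycF] at hS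
    obtain ⟨hcond, h0⟩ := hS
    ext a
    simp only [Finset.mem_insert, Finset.mem_image, Finset.mem_filter, Finset.mem_range]
    constructor
    · rintro (rfl | ⟨j, ⟨-, hj⟩, rfl⟩)
      · exact h0
      · exact hj
    · intro ha
      by_cases hne : a = 0
      · exact Or.inl hne
      · right
        obtain ⟨hv2, hvm⟩ := val_bounds hm hcond h0 ha hne
        have hval : a.val - 2 + 2 = a.val := by omega
        refine ⟨a.val - 2, ⟨by omega, ?_⟩, ?_⟩
        · rw [hval, natCast_val']; exact ha
        · rw [hval, natCast_val']
  refine Finset.sum_nbij'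
    (i := fun S => (Finset.range (m - 3)).filter (fun j => (((j + 2 : ℕ) : ZMod m)) ∈ S))
    (j := fun T => insert (0 : ZMod m) (T.image (fun j => ((j + 2 : ℕ) : ZMod m)))) ?_ ?_ hleft ?_ ?_
  · -- maps into pthF (m - 3)
    intro S hS
    simp only [Finset.mem_filter, mem_cycF] at hS
    obtain ⟨hcond, -⟩ := hS
    rw [mem_pthF]
    refine ⟨Finset.filter_subset _ _, ?_⟩
    rintro j ⟨hj1, hj2⟩
    simp only [Finset.mem_filter, Finset.mem_range] at hj1 hj2
    apply hcond ((j + 2 : ℕ) : ZMod m)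
    refine ⟨hj1.2, ?_⟩
    have : ((j + 1 + 2 : ℕ) : ZMod m) = ((j + 2 : ℕ) : ZMod m) + 1 := by push_cast; ring
    rw [← this]
    exact hj2.2
  · -- j maps into the cyc filter
    intro T hT
    rw [mem_pthF] at hT
    obtain ⟨hsub, hcond⟩ := hT
    have hlt : ∀ a ∈ T, a + 2 < m := by
      intro a ha; have := hsub ha; simp only [Finset.mem_range] at this; omega
    simp only [Finset.mem_filter, mem_cycF]
    refine ⟨?_, Finset.mem_insert_self _ _⟩
    rintro i ⟨hi1, hi2⟩
    rcases Finset.mem_insert.mp hi1 with rfl | hi1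
    · -- i = 0, so 1 ∈ j T
      rcases Finset.mem_insert.mp hi2 with h | h
      · -- 0 + 1 = 0 : impossible since m ≥ 3
        have : (1 : ℕ) = 0 := by
          apply natCast_inj' (by omega : (1:ℕ) < m) (by omega : (0:ℕ) < m)
          simpa using h
        omega
      · simp only [Finset.mem_image] at h
        obtain ⟨a, ha, hq⟩ := h
        have ha' := hlt a ha
        have : a + 2 = 1 := by
          apply natCast_inj' ha' (by omega)
          rw [hq]; simp
        omega
    · simp only [Finset.mem_image] at hi1
      obtain ⟨a, ha, rfl⟩ := hi1
      have ha' := hlt a ha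
      rcases Finset.mem_insert.mp hi2 with h | h
      · -- cast(a+3) = 0
        have h3 : ((a + 3 : ℕ) : ZMod m) = 0 := by
          rw [show ((a + 3 : ℕ) : ZMod m) = ((a + 2 : ℕ) : ZMod m) + 1 by push_cast; ring]
          exact h
        rcases Nat.lt_or_ge (a + 3) m with h4 | h4
        · have : a + 3 = 0 := natCast_inj' h4 (by omega) (by rw [h3]; simp)
          omega
        · -- a + 3 = m, but a < m - 3 so a + 3 < m
          have := hsub ha
          simp only [Finset.mem_range] at this
          omega
      · -- cast(a+2)+1 = cast(b+2)
        simp only [Finset.mem_image] at h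
        obtain ⟨b, hb, hq⟩ := h
        have hb' := hlt b hb
        have haa : a + 3 < m := by
          have := hsub ha; simp only [Finset.mem_range] at this; omega
        have : b + 2 = a + 3 := by
          apply natCast_inj' hb' haa
          rw [hq, show ((a + 3 : ℕ) : ZMod m) = ((a + 2 : ℕ) : ZMod m) + 1 by push_cast; ring]
        have hba : b = a + 1 := by omega
        exact hcond a ⟨ha, hba ▸ hb⟩
  · -- right inverse
    intro T hT
    rw [mem_pthF] at hT
    obtain ⟨hsub, -⟩ := hT
    ext k
    simp only [Finset.mem_filter, Finset.mem_range, Finset.mem_insert, Finset.mem_image]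
    constructor
    · rintro ⟨hk, h | ⟨b, hb, hbk⟩⟩
      · exact absurd h (hcast k (by omega))
      · have hb' : b + 2 < m := by have := hsub hb; simp only [Finset.mem_range] at this; omega
        have := natCast_inj' hb' (by omega) hbk
        have : b = k := by omega
        exact this ▸ hb
    · intro hk
      have := hsub hk
      simp only [Finset.mem_range] at this
      exact ⟨this, Or.inr ⟨k, hk, rfl⟩⟩
  · -- weights
    intro S hS
    have h1 := hleft S hS
    have hcard : S.card = ((Finset.range (m - 3)).filter
        (fun j => (((j + 2 : ℕ) : ZMod m)) ∈ S)).card + 1 := by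
      conv_lhs => rw [← h1]
      rw [Finset.card_insert_of_notMem (h0im _ (Finset.filter_subset _ _)),
        hinj _ (Finset.filter_subset _ _)]
    rw [hcard, pow_succ]
    ring

lemma Pcyc_eq (hm : 3 ≤ m) : Pcyc m = Ppath (m - 1) - Ppath (m - 3) := by
  have := Finset.sum_filter_add_sum_filter_not (cycF m)
    (fun S => (0 : ZMod m) ∈ S) (fun S => (-1 : ℤ) ^ S.card)
  rw [Pcyc, ← this, partB hm, partA hm]
  ring

end Cyc

lemma sum_eq_pow_Pcyc (m n : ℕ) [NeZero m] :
    ∑ η ∈ Finset.univ.filter (fun η : ZMod m → Finset (Fin n) =>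
        ∀ i, η i ∩ η (i + 1) = ∅),
      (-1 : ℤ) ^ (∑ i, (η i).card) = (Pcyc m) ^ n := by
  have hpow : (Pcyc m) ^ n = ∏ _c : Fin n, Pcyc m := by
    rw [Finset.prod_const, Finset.card_univ, Fintype.card_fin]
  rw [hpow]
  simp only [Pcyc]
  rw [Finset.prod_univ_sum (fun _ : Fin n => cycF m) (fun _ S => (-1 : ℤ) ^ S.card)]
  have hprodpow : ∀ x : Fin n → Finset (ZMod m),
      (∏ c : Fin n, (-1 : ℤ) ^ (x c).card) = (-1 : ℤ) ^ (∑ c, (x c).card) := by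
    intro x
    rw [← Finset.prod_pow_eq_pow_sum]
  rw [Finset.sum_congr rfl (fun x _ => hprodpow x)]
  have hswap : ∀ η : ZMod m → Finset (Fin n),
      (∑ i, (η i).card) = ∑ c : Fin n, (Finset.univ.filter (fun i => c ∈ η i)).card := by
    intro η
    have h1 : ∀ i : ZMod m, (η i).card = ∑ c : Fin n, if c ∈ η i then 1 else 0 := by
      intro i
      rw [← Finset.card_filter, Finset.filter_univ_mem]
    simp only [h1, Finset.card_filter]
    exact Finset.sum_comm
  refine Finset.sum_nbij'
    (i := fun η c => Finset.univ.filter (fun i => c ∈ η i))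
    (j := fun x i => Finset.univ.filter (fun c => i ∈ x c)) ?_ ?_ ?_ ?_ ?_
  · intro η hη
    simp only [Finset.mem_filter, Finset.mem_univ, true_and] at hη
    rw [Fintype.mem_piFinset]
    intro c
    rw [mem_cycF]
    rintro i ⟨hi1, hi2⟩
    simp only [Finset.mem_filter, Finset.mem_univ, true_and] at hi1 hi2
    have := hη i
    rw [Finset.eq_empty_iff_forall_notMem] at this
    exact this c (Finset.mem_inter.mpr ⟨hi1, hi2⟩)
  · intro x hx
    rw [Fintype.mem_piFinset] at hx
    simp only [Finset.mem_filter, Finset.mem_univ, true_and]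
    intro i
    rw [Finset.eq_empty_iff_forall_notMem]
    intro c hc
    simp only [Finset.mem_inter, Finset.mem_filter, Finset.mem_univ, true_and] at hc
    exact (mem_cycF.mp (hx c)) i hc
  · intro η hη
    funext i
    ext c
    simp
  · intro x hx
    funext c
    ext i
    simp
  · intro η hη
    rw [hswap η]


/-- **Reduced Euler characteristic of `Hom₊(C_m,K_n)` (from Corollary 2.7 /
`crl:cplus`).** For `m ≥ 3`, `n ≥ 1` and `k = ⌊(m+1)/3⌋`, the sum of
`(−1)^{Σ_i |η i|}` over all functions `η : ZMod m → Finset (Fin n)` whose values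
on cyclically adjacent vertices are disjoint (the zero function included)
equals `2^n (−1)^{nk}` if `3 ∣ m` and `(−1)^{nk}` otherwise. -/
theorem cohomology_of_colorings_of_cycles_stmt9
    (m n : ℕ) [NeZero m] (hm : 3 ≤ m) (hn : 1 ≤ n) :
    ∑ η ∈ Finset.univ.filter (fun η : ZMod m → Finset (Fin n) =>
        ∀ i, η i ∩ η (i + 1) = ∅),
      (-1 : ℤ) ^ (∑ i, (η i).card)
    = if 3 ∣ m then 2 ^ n * (-1 : ℤ) ^ (n * ((m + 1) / 3))
      else (-1 : ℤ) ^ (n * ((m + 1) / 3)) := by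
  rw [sum_eq_pow_Pcyc, Pcyc_eq hm, key_arith m hm]
  by_cases h3 : 3 ∣ m
  · rw [if_pos h3, if_pos h3, mul_pow, ← pow_mul, Nat.mul_comm]
  · rw [if_neg h3, if_neg h3, ← pow_mul, Nat.mul_comm]
end

section
/- For all integers m, n ≥ 1, the number of monotone lattice paths from (0,0) to (m,n) whose spread is strictly less than m+n equals (m+n)/gcd(m,n). (Equivalently: the number of very thin (m,n)-torus fronts is (m+n)/gcd(m,n).) -/
/-- The value `f(v_j) = n·x_j − m·y_j` at the `j`-th vertex of the monotone
lattice path encoded by the step sequence `s : Fin (m+n) → Bool`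
(`true` = eastbound step `E = (1,0)`, `false` = northbound step `N = (0,1)`). -/
def pathF (m n : ℕ) (s : Fin (m + n) → Bool) (j : ℕ) : ℤ :=
  (n : ℤ) * ((Finset.univ.filter (fun i : Fin (m + n) => i.val < j ∧ s i = true)).card : ℤ)
  - (m : ℤ) * ((Finset.univ.filter (fun i : Fin (m + n) => i.val < j ∧ s i = false)).card : ℤ)

/-- The spread of a monotone lattice path: the difference between the maximum
and the minimum of `f(x,y) = n·x − m·y` over the vertices of the path. -/
def pathSpread (m n : ℕ) (s : Fin (m + n) → Bool) : ℤ :=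
  ((Finset.range (m + n + 1)).image (pathF m n s)).max'
    (Finset.Nonempty.image (Finset.nonempty_range_iff.mpr (Nat.succ_ne_zero _)) _)
  - ((Finset.range (m + n + 1)).image (pathF m n s)).min'
    (Finset.Nonempty.image (Finset.nonempty_range_iff.mpr (Nat.succ_ne_zero _)) _)

namespace VeryThin

lemma count_succ (N : ℕ) (p : Fin N → Bool) (b : Bool) (j : ℕ) (hj : j < N) :
    (Finset.univ.filter (fun i : Fin N => i.val < j + 1 ∧ p i = b)).card
      = (Finset.univ.filter (fun i : Fin N => i.val < j ∧ p i = b)).card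
        + (if p ⟨j, hj⟩ = b then 1 else 0) := by
  by_cases h : p ⟨j, hj⟩ = b
  · rw [if_pos h]
    have hins : (Finset.univ.filter (fun i : Fin N => i.val < j + 1 ∧ p i = b))
        = insert ⟨j, hj⟩ (Finset.univ.filter (fun i : Fin N => i.val < j ∧ p i = b)) := by
      ext i
      simp only [Finset.mem_filter, Finset.mem_univ, true_and, Finset.mem_insert]
      constructor
      · rintro ⟨h1, h2⟩
        rcases Nat.lt_succ_iff_lt_or_eq.mp h1 with h1 | h1
        · exact Or.inr ⟨h1, h2⟩
        · exact Or.inl (Fin.ext h1)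
      · rintro (rfl | ⟨h1, h2⟩)
        · exact ⟨Nat.lt_succ_self j, h⟩
        · exact ⟨Nat.lt_succ_of_lt h1, h2⟩
    rw [hins, Finset.card_insert_of_notMem]
    simp
  · rw [if_neg h, Nat.add_zero]
    have hfe : (Finset.univ.filter (fun i : Fin N => i.val < j + 1 ∧ p i = b))
        = (Finset.univ.filter (fun i : Fin N => i.val < j ∧ p i = b)) := by
      ext i
      simp only [Finset.mem_filter, Finset.mem_univ, true_and]
      constructor
      · rintro ⟨h1, h2⟩
        rcases Nat.lt_succ_iff_lt_or_eq.mp h1 with h1 | h1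
        · exact ⟨h1, h2⟩
        · exact absurd h2 (by rwa [show i = ⟨j, hj⟩ from Fin.ext h1])
      · rintro ⟨h1, h2⟩
        exact ⟨Nat.lt_succ_of_lt h1, h2⟩
    rw [hfe, Nat.add_zero]

lemma pathF_zero (m n : ℕ) (s : Fin (m + n) → Bool) : pathF m n s 0 = 0 := by
  simp [pathF]

lemma pathF_succ (m n : ℕ) (s : Fin (m + n) → Bool) (j : ℕ) (hj : j < m + n) :
    pathF m n s (j + 1) = pathF m n s j + (if s ⟨j, hj⟩ then (n : ℤ) else -(m : ℤ)) := by
  unfold pathF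
  rw [count_succ (m + n) s true j hj, count_succ (m + n) s false j hj]
  cases h : s ⟨j, hj⟩ <;> simp [h] <;> ring

lemma res_step (m' n' : ℕ) (hm'1 : 1 ≤ m') (hn'1 : 1 ≤ n') (x : ℕ) :
    (x + n') % (m' + n')
      = if x % (m' + n') < m' then x % (m' + n') + n' else x % (m' + n') - m' := by
  have hL : 0 < m' + n' := by omega
  have hr : x % (m' + n') < m' + n' := Nat.mod_lt _ hL
  rw [Nat.add_mod, Nat.mod_eq_of_lt (show n' < m' + n' by omega)]
  by_cases h : x % (m' + n') < m'
  · rw [if_pos h, Nat.mod_eq_of_lt (by omega)]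
  · rw [if_neg h, Nat.mod_eq_sub_mod (by omega),
      show x % (m' + n') + n' - (m' + n') = x % (m' + n') - m' by omega,
      Nat.mod_eq_of_lt (by omega)]

def gp (N n' L m' : ℕ) (c : ℕ) : Fin N → Bool := fun i => decide ((i.val * n' + c) % L < m')

lemma gp_pathF (m n d m' n' c : ℕ) (hm : m = d * m') (hn : n = d * n')
    (hm'1 : 1 ≤ m') (hn'1 : 1 ≤ n') (hc : c < m' + n') :
    ∀ j ≤ m + n, pathF m n (gp (m + n) n' (m' + n') m' c) j
      = (d : ℤ) * ((((j * n' + c) % (m' + n') : ℕ) : ℤ) - (c : ℤ)) := by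
  intro j
  induction j with
  | zero =>
    intro _
    rw [pathF_zero]
    rw [Nat.zero_mul, Nat.zero_add, Nat.mod_eq_of_lt hc]
    ring
  | succ j ih =>
    intro hj1
    have hj : j < m + n := by omega
    have ih' := ih (by omega)
    rw [pathF_succ m n _ j hj, ih']
    have hmul : (j + 1) * n' + c = (j * n' + c) + n' := by ring
    have hstep := res_step m' n' hm'1 hn'1 (j * n' + c)
    have hrlt : (j * n' + c) % (m' + n') < m' + n' := Nat.mod_lt _ (by omega)
    by_cases hr : (j * n' + c) % (m' + n') < m'
    · have hgv : gp (m + n) n' (m' + n') m' c ⟨j, hj⟩ = true := by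
        simp only [gp, decide_eq_true_eq]
        exact hr
      rw [hgv, if_pos rfl, hmul, hstep, if_pos hr]
      have hnz : (n : ℤ) = (d : ℤ) * (n' : ℤ) := by exact_mod_cast congrArg (Nat.cast (R := ℤ)) hn
      push_cast
      rw [hnz]
      ring
    · have hgv : gp (m + n) n' (m' + n') m' c ⟨j, hj⟩ = false := by
        simp only [gp, decide_eq_false_iff_not]
        exact hr
      rw [hgv, if_neg (by simp), hmul, hstep, if_neg hr]
      have hmz : (m : ℤ) = (d : ℤ) * (m' : ℤ) := by exact_mod_cast congrArg (Nat.cast (R := ℤ)) hm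
      push_cast [Nat.cast_sub (Nat.le_of_not_lt hr)]
      rw [hmz]
      ring


lemma card_split (m n : ℕ) (s : Fin (m + n) → Bool) :
    (Finset.univ.filter (fun i : Fin (m + n) => s i = true)).card
      + (Finset.univ.filter (fun i : Fin (m + n) => s i = false)).card = m + n := by
  have h := Finset.card_filter_add_card_filter_not
    (s := (Finset.univ : Finset (Fin (m + n)))) (p := fun i => s i = true)
  have heq : Finset.univ.filter (fun i : Fin (m + n) => ¬ s i = true)
      = Finset.univ.filter (fun i : Fin (m + n) => s i = false) := by
    ext i; simp
  rw [heq] at h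
  simpa using h

lemma filter_lt_top (m n : ℕ) (s : Fin (m + n) → Bool) (b : Bool) :
    Finset.univ.filter (fun i : Fin (m + n) => i.val < m + n ∧ s i = b)
      = Finset.univ.filter (fun i : Fin (m + n) => s i = b) := by
  ext i; simp [i.isLt]

lemma card_true_of_end_zero (m n : ℕ) (hmn : 0 < m + n) (s : Fin (m + n) → Bool)
    (h0 : pathF m n s (m + n) = 0) :
    (Finset.univ.filter (fun i : Fin (m + n) => s i = true)).card = m := by
  unfold pathF at h0
  rw [filter_lt_top m n s true, filter_lt_top m n s false] at h0
  set A := (Finset.univ.filter (fun i : Fin (m + n) => s i = true)).card with hA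
  set B := (Finset.univ.filter (fun i : Fin (m + n) => s i = false)).card with hB
  have hAB : A + B = m + n := card_split m n s
  have hABz : (A : ℤ) + (B : ℤ) = (m : ℤ) + (n : ℤ) := by exact_mod_cast hAB
  have hcancel : ((m : ℤ) + n) * A = ((m : ℤ) + n) * m := by
    linear_combination h0 + (m : ℤ) * hABz
  have hz : ((m : ℤ) + n) ≠ 0 := by
    have : (0 : ℤ) < (m : ℤ) + n := by exact_mod_cast hmn
    omega
  have := mul_left_cancel₀ hz hcancel
  exact_mod_cast this

lemma gp_end_zero (m n d m' n' c : ℕ) (hd : 0 < d) (hm : m = d * m') (hn : n = d * n')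
    (hm'1 : 1 ≤ m') (hn'1 : 1 ≤ n') (hc : c < m' + n') :
    pathF m n (gp (m + n) n' (m' + n') m' c) (m + n) = 0 := by
  rw [gp_pathF m n d m' n' c hm hn hm'1 hn'1 hc (m + n) le_rfl]
  have hres : ((m + n) * n' + c) % (m' + n') = c := by
    have h1 : (m + n) * n' + c = (m' + n') * (d * n') + c := by
      rw [hm, hn]; ring
    rw [h1, Nat.mul_add_mod, Nat.mod_eq_of_lt hc]
  rw [hres]
  ring

lemma gp_card (m n d m' n' c : ℕ) (hd : 0 < d) (hm : m = d * m') (hn : n = d * n')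
    (hm'1 : 1 ≤ m') (hn'1 : 1 ≤ n') (hc : c < m' + n') :
    (Finset.univ.filter (fun i : Fin (m + n) => gp (m + n) n' (m' + n') m' c i = true)).card
      = m := by
  have hmn : 0 < m + n := by
    have : 0 < m := by rw [hm]; positivity
    omega
  exact card_true_of_end_zero m n hmn _ (gp_end_zero m n d m' n' c hd hm hn hm'1 hn'1 hc)

lemma gp_spread (m n d m' n' c : ℕ) (hd : 0 < d) (hm : m = d * m') (hn : n = d * n')
    (hm'1 : 1 ≤ m') (hn'1 : 1 ≤ n') (hc : c < m' + n') :
    pathSpread m n (gp (m + n) n' (m' + n') m' c) < (m : ℤ) + n := by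
  set s := gp (m + n) n' (m' + n') m' c with hs
  have hne : ((Finset.range (m + n + 1)).image (pathF m n s)).Nonempty :=
    Finset.Nonempty.image (Finset.nonempty_range_iff.mpr (Nat.succ_ne_zero _)) _
  have hub : ∀ x ∈ (Finset.range (m + n + 1)).image (pathF m n s),
      x ≤ (d : ℤ) * (((m' : ℤ) + n') - 1 - c) := by
    intro x hx
    obtain ⟨j, hjm, rfl⟩ := Finset.mem_image.mp hx
    have hj : j ≤ m + n := by
      have := Finset.mem_range.mp hjm; omega
    rw [gp_pathF m n d m' n' c hm hn hm'1 hn'1 hc j hj]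
    have hr : (j * n' + c) % (m' + n') < m' + n' := Nat.mod_lt _ (by omega)
    have hr' : (((j * n' + c) % (m' + n') : ℕ) : ℤ) ≤ (m' : ℤ) + n' - 1 := by omega
    have hd' : (0 : ℤ) ≤ (d : ℤ) := by positivity
    nlinarith
  have hlb : ∀ x ∈ (Finset.range (m + n + 1)).image (pathF m n s),
      -((d : ℤ) * c) ≤ x := by
    intro x hx
    obtain ⟨j, hjm, rfl⟩ := Finset.mem_image.mp hx
    have hj : j ≤ m + n := by
      have := Finset.mem_range.mp hjm; omega
    rw [gp_pathF m n d m' n' c hm hn hm'1 hn'1 hc j hj]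
    have hr0 : (0 : ℤ) ≤ (((j * n' + c) % (m' + n') : ℕ) : ℤ) := by positivity
    have hd' : (0 : ℤ) ≤ (d : ℤ) := by positivity
    nlinarith
  have h1 := Finset.max'_le _ hne _ hub
  have h2 := Finset.le_min' _ hne _ hlb
  have hmnz : (m : ℤ) + n = (d : ℤ) * ((m' : ℤ) + n') := by
    have : ((m + n : ℕ) : ℤ) = ((d * (m' + n') : ℕ) : ℤ) := by
      congr 1; rw [hm, hn]; ring
    push_cast at this
    linarith
  have hd1 : (1 : ℤ) ≤ (d : ℤ) := by exact_mod_cast hd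
  have hgoal : ((Finset.range (m + n + 1)).image (pathF m n s)).max' hne
      - ((Finset.range (m + n + 1)).image (pathF m n s)).min' hne < (m : ℤ) + n := by
    nlinarith
  exact hgoal


lemma exists_zero_res (n' L c : ℕ) (hL : 0 < L) (hcop : Nat.gcd L n' = 1) :
    ∃ j < L, (j * n' + c) % L = 0 := by
  let phi : Fin L → Fin L := fun i => ⟨(i.val * n' + c) % L, Nat.mod_lt _ hL⟩
  have hinj : Function.Injective phi := by
    intro a b hab
    have h1 : (a.val * n' + c) % L = (b.val * n' + c) % L := by
      simpa [phi, Fin.ext_iff] using hab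
    have h2 : a.val * n' ≡ b.val * n' [MOD L] := Nat.ModEq.add_right_cancel' c h1
    have h3 : a.val ≡ b.val [MOD L] := Nat.ModEq.cancel_right_of_coprime hcop h2
    exact Fin.ext (by
      rw [← Nat.mod_eq_of_lt a.isLt, ← Nat.mod_eq_of_lt b.isLt]; exact h3)
  obtain ⟨j, hj⟩ := Finite.injective_iff_surjective.mp hinj ⟨0, hL⟩
  exact ⟨j.val, j.isLt, by simpa [phi, Fin.ext_iff] using hj⟩

lemma pathF_congr (m n : ℕ) (s : Fin (m + n) → Bool) :
    ∀ j ≤ m + n, ((m : ℤ) + n) ∣ (pathF m n s j - (j : ℤ) * n) := by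
  intro j
  induction j with
  | zero => intro _; simp [pathF]
  | succ j ih =>
    intro hj1
    have hj : j < m + n := by omega
    have ihh := ih (by omega)
    rw [pathF_succ m n s j hj]
    cases hsi : s ⟨j, hj⟩
    · rw [if_neg (by simp)]
      have heq : pathF m n s j + -(m : ℤ) - ((j : ℕ) + 1 : ℕ) * n
          = (pathF m n s j - (j : ℤ) * n) + (-1) * ((m : ℤ) + n) := by
        push_cast; ring
      rw [heq]
      exact dvd_add ihh (Dvd.intro_left _ rfl)
    · rw [if_pos rfl]
      have heq : pathF m n s j + (n : ℤ) - ((j : ℕ) + 1 : ℕ) * n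
          = pathF m n s j - (j : ℤ) * n := by
        push_cast; ring
      rw [heq]
      exact ihh

lemma backward (m n d m' n' : ℕ) (hd : 0 < d) (hm : m = d * m') (hn : n = d * n')
    (hm'1 : 1 ≤ m') (hn'1 : 1 ≤ n')
    (s : Fin (m + n) → Bool) (hsp : pathSpread m n s < (m : ℤ) + n) :
    ∃ c < m' + n', s = gp (m + n) n' (m' + n') m' c := by
  have hL0 : 0 < m' + n' := by omega
  have hmn : m + n = d * (m' + n') := by rw [hm, hn]; ring
  have hmn0 : 0 < m + n := by
    have : 0 < m := by rw [hm]; positivity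
    omega
  have hmnz : (m : ℤ) + n = (d : ℤ) * ((m' : ℤ) + n') := by
    have : ((m + n : ℕ) : ℤ) = ((d * (m' + n') : ℕ) : ℤ) := by congr 1
    push_cast at this; linarith
  have hdvd : ∀ j : ℕ, (d : ℤ) ∣ pathF m n s j := by
    intro j
    unfold pathF
    have h1 : (d : ℤ) ∣ (n : ℤ) := ⟨(n' : ℤ), by exact_mod_cast congrArg (Nat.cast (R := ℤ)) hn⟩
    have h2 : (d : ℤ) ∣ (m : ℤ) := ⟨(m' : ℤ), by exact_mod_cast congrArg (Nat.cast (R := ℤ)) hm⟩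
    exact dvd_sub (h1.mul_right _) (h2.mul_right _)
  have hne : ((Finset.range (m + n + 1)).image (pathF m n s)).Nonempty :=
    Finset.Nonempty.image (Finset.nonempty_range_iff.mpr (Nat.succ_ne_zero _)) _
  set FS := (Finset.range (m + n + 1)).image (pathF m n s) with hFS
  have hsp' : FS.max' hne - FS.min' hne < (m : ℤ) + n := hsp
  have hmemF : ∀ j ≤ m + n, pathF m n s j ∈ FS := by
    intro j hj
    exact Finset.mem_image.mpr ⟨j, Finset.mem_range.mpr (by omega), rfl⟩
  have hμd : (d : ℤ) ∣ FS.min' hne := by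
    obtain ⟨x, hx, hxe⟩ := Finset.mem_image.mp (FS.min'_mem hne)
    rw [← hxe]; exact hdvd x
  obtain ⟨ν, hν⟩ := hμd
  have hLz : (0 : ℤ) < ((m' : ℤ) + n') := by
    have : (0 : ℤ) < ((m' + n' : ℕ) : ℤ) := by exact_mod_cast hL0
    push_cast at this; linarith
  set c : ℕ := ((-ν) % ((m' : ℤ) + n')).toNat with hcdef
  have hcL : (c : ℤ) = (-ν) % ((m' : ℤ) + n') :=
    Int.toNat_of_nonneg (Int.emod_nonneg _ (by linarith))
  have hclt : (c : ℤ) < (m' : ℤ) + n' := by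
    rw [hcL]; exact Int.emod_lt_of_pos _ hLz
  have hc : c < m' + n' := by exact_mod_cast (by push_cast; linarith : (c : ℤ) < ((m' + n' : ℕ) : ℤ))
  have hLdvd_cν : ((m' : ℤ) + n') ∣ ((c : ℤ) + ν) := by
    have h1 := Int.emod_add_mul_ediv (-ν) ((m' : ℤ) + n')
    exact ⟨-((-ν) / ((m' : ℤ) + n')), by rw [hcL]; linear_combination h1⟩
  have hd0z : (0 : ℤ) < (d : ℤ) := by exact_mod_cast hd
  -- key formula
  have key : ∀ j ≤ m + n,
      pathF m n s j = (d : ℤ) * ((((j * n' + c) % (m' + n') : ℕ) : ℤ) + ν) := by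
    intro j hj
    obtain ⟨T, hT⟩ := hdvd j
    have hminj := FS.min'_le _ (hmemF j hj)
    have hmaxj := FS.le_max' _ (hmemF j hj)
    have hb1 : 0 ≤ T - ν := by nlinarith [hminj]
    have hb2 : T - ν < (m' : ℤ) + n' := by nlinarith [hmaxj, hsp']
    have hdiv : ((m' : ℤ) + n') ∣ (T - ν) - ((j : ℤ) * n' + c) := by
      obtain ⟨q, hq⟩ := pathF_congr m n s j hj
      have hdz : (d : ℤ) ≠ 0 := by linarith
      have h5 : (T : ℤ) - (j : ℤ) * n' = ((m' : ℤ) + n') * q := by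
        apply mul_left_cancel₀ hdz
        rw [hT] at hq
        have hnn : (n : ℤ) = (d : ℤ) * n' := by
          have := congrArg (Nat.cast (R := ℤ)) hn; push_cast at this; linarith
        rw [hmnz] at hq
        linear_combination hq + (j : ℤ) * hnn
      obtain ⟨q2, hq2⟩ := hLdvd_cν
      exact ⟨q - q2, by linear_combination h5 - hq2⟩
    have huniq : T - ν = (((j * n' + c) % (m' + n') : ℕ) : ℤ) := by
      have h1 : (((j * n' + c) % (m' + n') : ℕ) : ℤ)
          = ((j : ℤ) * n' + c) % ((m' : ℤ) + n') := by
        push_cast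
        ring
      have h2 : (T - ν) % ((m' : ℤ) + n') = T - ν := Int.emod_eq_of_lt hb1 hb2
      have h3 : ((j : ℤ) * n' + c) % ((m' : ℤ) + n') = (T - ν) % ((m' : ℤ) + n') := by
        have := Int.modEq_iff_dvd.mpr hdiv
        exact this
      rw [h1, h3, h2]
    rw [hT, ← huniq]
    ring
  refine ⟨c, hc, ?_⟩
  funext i
  have hji : (i : ℕ) < m + n := i.isLt
  have h1 := pathF_succ m n s i.val hji
  have e1 := key i.val (le_of_lt hji)
  have e2 := key (i.val + 1) (by omega)
  have hmul : (i.val + 1) * n' + c = (i.val * n' + c) + n' := by ring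
  have hstep := res_step m' n' hm'1 hn'1 (i.val * n' + c)
  have hieq : (⟨i.val, hji⟩ : Fin (m + n)) = i := Fin.ext rfl
  rw [hieq] at h1
  have hrlt : (i.val * n' + c) % (m' + n') < m' + n' := Nat.mod_lt _ hL0
  by_cases hr : (i.val * n' + c) % (m' + n') < m'
  · have hdiff : pathF m n s (i.val + 1) - pathF m n s i.val = (n : ℤ) := by
      rw [e1, e2, hmul, hstep, if_pos hr]
      have hnn : (n : ℤ) = (d : ℤ) * n' := by
        have := congrArg (Nat.cast (R := ℤ)) hn; push_cast at this; linarith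
      push_cast
      rw [hnn]; ring
    have hsi : s i = true := by
      cases hsi : s i
      · exfalso
        rw [hsi, if_neg (by simp)] at h1
        have : (n : ℤ) = -(m : ℤ) := by linarith [hdiff, h1]
        have hm0 : (0 : ℤ) < m := by exact_mod_cast (by omega : 0 < m)
        have hn0 : (0 : ℤ) < n := by exact_mod_cast (by omega : 0 < n)
        linarith
      · rfl
    rw [hsi]
    show true = gp (m + n) n' (m' + n') m' c i
    simp [gp, hr]
  · have hdiff : pathF m n s (i.val + 1) - pathF m n s i.val = -(m : ℤ) := by
      rw [e1, e2, hmul, hstep, if_neg hr]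
      have hmm : (m : ℤ) = (d : ℤ) * m' := by
        have := congrArg (Nat.cast (R := ℤ)) hm; push_cast at this; linarith
      push_cast [Nat.cast_sub (Nat.le_of_not_lt hr)]
      rw [hmm]; ring
    have hsi : s i = false := by
      cases hsi : s i
      · rfl
      · exfalso
        rw [hsi, if_pos rfl] at h1
        have : (n : ℤ) = -(m : ℤ) := by linarith [hdiff, h1]
        have hm0 : (0 : ℤ) < m := by exact_mod_cast (by omega : 0 < m)
        have hn0 : (0 : ℤ) < n := by exact_mod_cast (by omega : 0 < n)
        linarith
    rw [hsi]
    show false = gp (m + n) n' (m' + n') m' c i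
    simp [gp, hr]

end VeryThin

open VeryThin

/-- **The number of very thin `(m,n)`-torus fronts is `(m+n)/gcd(m,n)`.**
For `m, n ≥ 1`, the number of monotone lattice paths from `(0,0)` to `(m,n)`
(`m` eastbound and `n` northbound steps) whose spread is strictly less than
`m + n` equals `(m+n)/gcd(m,n)`. -/
theorem cohomology_of_colorings_of_cycles_stmt11
    (m n : ℕ) (hm : 1 ≤ m) (hn : 1 ≤ n) :
    (Finset.univ.filter (fun s : Fin (m + n) → Bool =>
        (Finset.univ.filter (fun i => s i = true)).card = m ∧
        pathSpread m n s < (m + n : ℤ))).card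
    = (m + n) / Nat.gcd m n := by
  have hd0 : 0 < Nat.gcd m n := Nat.gcd_pos_of_pos_left n hm
  obtain ⟨m', hm'⟩ := Nat.gcd_dvd_left m n
  obtain ⟨n', hn'⟩ := Nat.gcd_dvd_right m n
  have hm'1 : 1 ≤ m' := by
    rcases Nat.eq_zero_or_pos m' with h | h
    · rw [h, Nat.mul_zero] at hm'; omega
    · exact h
  have hn'1 : 1 ≤ n' := by
    rcases Nat.eq_zero_or_pos n' with h | h
    · rw [h, Nat.mul_zero] at hn'; omega
    · exact h
  have hm'eq : m / Nat.gcd m n = m' :=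
    Nat.div_eq_of_eq_mul_left hd0 (by linarith [hm', Nat.mul_comm (Nat.gcd m n) m'])
  have hn'eq : n / Nat.gcd m n = n' :=
    Nat.div_eq_of_eq_mul_left hd0 (by linarith [hn', Nat.mul_comm (Nat.gcd m n) n'])
  have cop : Nat.Coprime (m' + n') n' := by
    rw [Nat.coprime_add_self_left]
    rw [← hm'eq, ← hn'eq]
    exact Nat.coprime_div_gcd_div_gcd hd0
  have hLmn : Nat.gcd m n * (m' + n') = m + n := by
    rw [Nat.mul_add, ← hm', ← hn']
  have hL0 : 0 < m' + n' := by omega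
  have hLle : m' + n' ≤ m + n := by
    calc m' + n' ≤ Nat.gcd m n * (m' + n') := Nat.le_mul_of_pos_left _ hd0
    _ = m + n := hLmn
  have hfilter_eq : (Finset.univ.filter (fun s : Fin (m + n) → Bool =>
        (Finset.univ.filter (fun i => s i = true)).card = m ∧
        pathSpread m n s < (m + n : ℤ)))
      = (Finset.range (m' + n')).image (fun c => gp (m + n) n' (m' + n') m' c) := by
    ext s
    simp only [Finset.mem_filter, Finset.mem_univ, true_and, Finset.mem_image,
      Finset.mem_range]
    constructor
    · rintro ⟨hcard, hsp⟩
      obtain ⟨c, hc, hseq⟩ := backward m n (Nat.gcd m n) m' n' hd0 hm' hn' hm'1 hn'1 s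
        (by push_cast at hsp ⊢; linarith)
      exact ⟨c, hc, hseq.symm⟩
    · rintro ⟨c, hc, rfl⟩
      refine ⟨gp_card m n (Nat.gcd m n) m' n' c hd0 hm' hn' hm'1 hn'1 hc, ?_⟩
      have := gp_spread m n (Nat.gcd m n) m' n' c hd0 hm' hn' hm'1 hn'1 hc
      push_cast
      linarith
  rw [hfilter_eq, Finset.card_image_of_injOn, Finset.card_range]
  · rw [← hLmn, Nat.mul_div_cancel_left _ hd0]
  · intro c hc c' hc' heq
    simp only [Finset.mem_coe, Finset.mem_range] at hc hc'
    have hcop2 : Nat.gcd (m' + n') n' = 1 := cop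
    obtain ⟨j0, hj0L, hj0⟩ := exists_zero_res n' (m' + n') c hL0 hcop2
    obtain ⟨j1, hj1L, hj1⟩ := exists_zero_res n' (m' + n') c' hL0 hcop2
    have hd0z : (0 : ℤ) < (Nat.gcd m n : ℤ) := by exact_mod_cast hd0
    have hle : ∀ c1 c2 : ℕ, c1 < m' + n' → c2 < m' + n' →
        gp (m + n) n' (m' + n') m' c1 = gp (m + n) n' (m' + n') m' c2 →
        ∀ j : ℕ, j ≤ m + n → (j * n' + c1) % (m' + n') = 0 → c1 ≤ c2 := by
      intro c1 c2 hc1 hc2 he j hj hres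
      have hA := gp_pathF m n (Nat.gcd m n) m' n' c1 hm' hn' hm'1 hn'1 hc1 j hj
      have hB := gp_pathF m n (Nat.gcd m n) m' n' c2 hm' hn' hm'1 hn'1 hc2 j hj
      rw [he] at hA
      rw [hB, hres] at hA
      have hr0 : (0 : ℤ) ≤ (((j * n' + c2) % (m' + n') : ℕ) : ℤ) := by positivity
      simp only [Nat.cast_zero] at hA
      have hcanc := mul_left_cancel₀ (ne_of_gt hd0z) hA
      have : (c1 : ℤ) ≤ (c2 : ℤ) := by linarith
      exact_mod_cast this
    have h1 := hle c c' hc hc' heq j0 (le_trans (le_of_lt hj0L) hLle) hj0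
    have h2 := hle c' c hc' hc heq.symm j1 (le_trans (le_of_lt hj1L) hLle) hj1
    omega
end

section
/- For all integers m, n ≥ 1, every monotone lattice path from (0,0) to (m,n) whose spread is strictly less than m+n has spread exactly m + n − gcd(m,n). (In particular the width of a very thin (m,n)-torus front depends only on m and n.) -/
/-- Number of eastbound steps among the first `j` steps. -/
def eCount (m n : ℕ) (s : Fin (m + n) → Bool) (j : ℕ) : ℕ :=
  (Finset.univ.filter (fun i : Fin (m + n) => i.val < j ∧ s i = true)).card

/-- **The width of a very thin `(m,n)`-torus front depends only on `m` and `n`.**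
For `m, n ≥ 1`, every monotone lattice path from `(0,0)` to `(m,n)` whose
spread is strictly less than `m+n` has spread exactly `m + n − gcd(m,n)`. -/
theorem cohomology_of_colorings_of_cycles_stmt12
    (m n : ℕ) (hm : 1 ≤ m) (hn : 1 ≤ n) (s : Fin (m + n) → Bool)
    (hs : (Finset.univ.filter (fun i => s i = true)).card = m)
    (hthin : pathSpread m n s < (m + n : ℤ)) :
    pathSpread m n s = (m : ℤ) + n - Nat.gcd m n := by
  classical
  set g := Nat.gcd m n with hg
  have hg0 : 0 < g := Nat.gcd_pos_of_pos_left n hm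
  have hgm : g ∣ m := Nat.gcd_dvd_left m n
  have hgn : g ∣ n := Nat.gcd_dvd_right m n
  have hgN : g ∣ m + n := Nat.dvd_add hgm hgn
  set L := (m + n) / g with hLdef
  have hgL : g * L = m + n := Nat.mul_div_cancel' hgN
  have hLleN : L ≤ m + n := Nat.div_le_self _ _
  -- count of indices below j
  have hcard : ∀ j, j ≤ m + n →
      (Finset.univ.filter (fun i : Fin (m + n) => i.val < j)).card = j := by
    intro j
    induction j with
    | zero => intro _; simp
    | succ k ih =>
      intro hk
      have hkN : k < m + n := hk
      have hins : (Finset.univ.filter (fun i : Fin (m + n) => i.val < k + 1))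
          = insert (⟨k, hkN⟩ : Fin (m + n))
              (Finset.univ.filter (fun i : Fin (m + n) => i.val < k)) := by
        ext i
        simp only [Finset.mem_filter, Finset.mem_univ, true_and, Finset.mem_insert,
          Fin.ext_iff]
        omega
      rw [hins, Finset.card_insert_of_notMem (by simp), ih (le_of_lt hkN)]
  have hsplit : ∀ j, j ≤ m + n →
      eCount m n s j
        + (Finset.univ.filter (fun i : Fin (m + n) => i.val < j ∧ s i = false)).card = j := by
    intro j hj
    have h1 : eCount m n s j
        = ((Finset.univ.filter (fun i : Fin (m + n) => i.val < j)).filter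
            (fun i => s i = true)).card := by
      rw [eCount, Finset.filter_filter]
    have h2 : (Finset.univ.filter (fun i : Fin (m + n) => i.val < j ∧ s i = false))
        = (Finset.univ.filter (fun i : Fin (m + n) => i.val < j)).filter
            (fun i => ¬ (s i = true)) := by
      rw [Finset.filter_filter]
      simp only [Bool.not_eq_true]
    rw [h1, h2, Finset.card_filter_add_card_filter_not, hcard j hj]
  have hformula : ∀ j, j ≤ m + n →
      pathF m n s j = ((m : ℤ) + n) * eCount m n s j - m * j := by
    intro j hj
    have h := hsplit j hj
    have hle : eCount m n s j ≤ j := by omega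
    have h2 : ((Finset.univ.filter
        (fun i : Fin (m + n) => i.val < j ∧ s i = false)).card : ℤ)
        = (j : ℤ) - eCount m n s j := by
      omega
    have h3 : ((Finset.univ.filter
        (fun i : Fin (m + n) => i.val < j ∧ s i = true)).card : ℤ)
        = (eCount m n s j : ℤ) := rfl
    unfold pathF
    rw [h2, h3]
    ring
  -- the image set, max, min
  set S := (Finset.range (m + n + 1)).image (pathF m n s) with hS
  have hSne : S.Nonempty :=
    Finset.Nonempty.image (Finset.nonempty_range_iff.mpr (Nat.succ_ne_zero _)) _
  set Mx := S.max' hSne with hMx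
  set mn := S.min' hSne with hmn
  have hspread : pathSpread m n s = Mx - mn := rfl
  have hmemS : ∀ j, j ≤ m + n → pathF m n s j ∈ S := by
    intro j hj
    exact Finset.mem_image_of_mem _ (Finset.mem_range.mpr (by omega))
  -- divisibility of all values by g
  have hdvd : ∀ x ∈ S, (g : ℤ) ∣ x := by
    intro x hx
    obtain ⟨j, hj, rfl⟩ := Finset.mem_image.mp hx
    rw [hformula j (by simpa using Nat.lt_succ_iff.mp (Finset.mem_range.mp hj))]
    have h1 : (g : ℤ) ∣ (m : ℤ) + n := by exact_mod_cast Int.natCast_dvd_natCast.mpr hgN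
    have h2 : (g : ℤ) ∣ (m : ℤ) := Int.natCast_dvd_natCast.mpr hgm
    exact dvd_sub (h1.mul_right _) (h2.mul_right _)
  have hdvdMx : (g : ℤ) ∣ Mx := hdvd _ (S.max'_mem hSne)
  have hdvdmn : (g : ℤ) ∣ mn := hdvd _ (S.min'_mem hSne)
  -- coprimality
  obtain ⟨m', hm'⟩ := hgm
  have hdivm : m / g = m' := by rw [hm']; exact Nat.mul_div_cancel_left m' hg0
  have hgcdNm : Nat.gcd (m + n) m = g := by
    rw [Nat.gcd_self_add_left, Nat.gcd_comm]
  have hcop : Nat.Coprime L m' := by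
    have h := Nat.coprime_div_gcd_div_gcd (m := m + n) (n := m) (by rw [hgcdNm]; exact hg0)
    rwa [hgcdNm, hdivm] at h
  -- injectivity of pathF on range L
  have hinj : ∀ j ≤ m + n, ∀ j' ≤ m + n,
      pathF m n s j = pathF m n s j' → (L : ℤ) ∣ ((j : ℤ) - j') := by
    intro j hj j' hj' heq
    rw [hformula j hj, hformula j' hj'] at heq
    have hNd : (m : ℤ) * ((j : ℤ) - j')
        = ((m : ℤ) + n) * ((eCount m n s j : ℤ) - eCount m n s j') := by
      linear_combination -heq
    have hmc : (m : ℤ) = (g : ℤ) * m' := by exact_mod_cast hm'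
    have hNc : (m : ℤ) + n = (g : ℤ) * L := by exact_mod_cast hgL.symm
    have hLd : (L : ℤ) ∣ (m' : ℤ) * ((j : ℤ) - j') := by
      refine ⟨(eCount m n s j : ℤ) - eCount m n s j', ?_⟩
      have hg0' : (g : ℤ) ≠ 0 := by exact_mod_cast hg0.ne'
      apply mul_left_cancel₀ hg0'
      linear_combination hNd - ((j : ℤ) - j') * hmc
        + ((eCount m n s j : ℤ) - eCount m n s j') * hNc
    have hcop' : IsCoprime (L : ℤ) (m' : ℤ) := by
      rw [Int.isCoprime_iff_gcd_eq_one, Int.gcd_natCast_natCast]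
      exact hcop
    exact hcop'.dvd_of_dvd_mul_left hLd
  -- counting
  have hmapsto : ∀ j ∈ Finset.range L,
      (pathF m n s j - mn) / (g : ℤ) ∈ Finset.Icc (0 : ℤ) ((Mx - mn) / (g : ℤ)) := by
    intro j hj
    have hjL : j < L := Finset.mem_range.mp hj
    have hjN : j ≤ m + n := le_trans hjL.le hLleN
    have hmem := hmemS j hjN
    have h1 : mn ≤ pathF m n s j := S.min'_le _ hmem
    have h2 : pathF m n s j ≤ Mx := S.le_max' _ hmem
    rw [Finset.mem_Icc]
    constructor
    · exact Int.ediv_nonneg (by linarith) (by positivity)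
    · exact Int.ediv_le_ediv (by exact_mod_cast hg0) (by linarith)
  have hinjOn : Set.InjOn (fun j => (pathF m n s j - mn) / (g : ℤ))
      ((Finset.range L : Finset ℕ) : Set ℕ) := by
    intro j hj j' hj' heq
    simp only [Finset.coe_range, Set.mem_Iio] at hj hj'
    have hjN : j ≤ m + n := le_trans hj.le hLleN
    have hj'N : j' ≤ m + n := le_trans hj'.le hLleN
    have hdj : (g : ℤ) ∣ pathF m n s j - mn := dvd_sub (hdvd _ (hmemS j hjN)) hdvdmn
    have hdj' : (g : ℤ) ∣ pathF m n s j' - mn := dvd_sub (hdvd _ (hmemS j' hj'N)) hdvdmn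
    have hF : pathF m n s j = pathF m n s j' := by
      have e1 := Int.ediv_mul_cancel hdj
      have e2 := Int.ediv_mul_cancel hdj'
      have e3 : (pathF m n s j - mn) / (g : ℤ) * g
          = (pathF m n s j' - mn) / (g : ℤ) * g := congrArg (· * (g : ℤ)) heq
      rw [e1, e2] at e3
      linarith
    have hLd := hinj j hjN j' hj'N hF
    by_contra hne
    have hne' : (j : ℤ) - j' ≠ 0 := by
      intro h; apply hne; omega
    have hge := Int.le_of_dvd (abs_pos.mpr hne') ((dvd_abs _ _).mpr hLd)
    have habs : |(j : ℤ) - j'| < L := by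
      rw [abs_lt]
      omega
    omega
  have hcount := Finset.card_le_card_of_injOn _ hmapsto hinjOn
  rw [Finset.card_range, Int.card_Icc] at hcount
  have hMxmn : (0 : ℤ) ≤ Mx - mn := by
    have h1 := S.min'_le _ (S.max'_mem hSne)
    linarith
  have hdivnn : (0 : ℤ) ≤ (Mx - mn) / (g : ℤ) :=
    Int.ediv_nonneg hMxmn (by positivity)
  have hLle : (L : ℤ) ≤ (Mx - mn) / (g : ℤ) + 1 := by omega
  have hdvdsp : (g : ℤ) ∣ Mx - mn := dvd_sub hdvdMx hdvdmn
  have hmul : (Mx - mn) / (g : ℤ) * g = Mx - mn := Int.ediv_mul_cancel hdvdsp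
  have hlow : (m : ℤ) + n ≤ (Mx - mn) + g := by
    have hgpos : (0 : ℤ) < g := by exact_mod_cast hg0
    have h1 : (L : ℤ) * g ≤ ((Mx - mn) / (g : ℤ) + 1) * g :=
      mul_le_mul_of_nonneg_right hLle (le_of_lt hgpos)
    have h2 : (L : ℤ) * g = (m : ℤ) + n := by
      have h3 : L * g = m + n := by rw [Nat.mul_comm]; exact hgL
      exact_mod_cast h3
    rw [h2, add_mul, one_mul, hmul] at h1
    linarith
  -- conclude
  rw [hspread] at hthin ⊢
  obtain ⟨a, ha⟩ := hdvdsp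
  have hbN : ((m : ℤ) + n) = (g : ℤ) * L := by exact_mod_cast hgL.symm
  have hgpos : (0 : ℤ) < g := by exact_mod_cast hg0
  have h1 : a < L := by
    have hx : (g : ℤ) * a < g * L := by rw [← ha, ← hbN]; exact_mod_cast hthin
    exact lt_of_mul_lt_mul_left hx (le_of_lt hgpos)
  have h2 : (L : ℤ) ≤ a + 1 := by
    have hx : (g : ℤ) * L ≤ g * (a + 1) := by
      rw [← hbN]; rw [ha] at hlow; linarith
    exact le_of_mul_le_mul_left hx hgpos
  have ha' : a = (L : ℤ) - 1 := by omega
  rw [ha, ha', hbN]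
  push_cast
  ring
end

section
/- For all integers m, n ≥ 1, set d = gcd(m,n) and p = (m+n)/d. If a monotone lattice path from (0,0) to (m,n) has spread strictly less than m+n, then its step sequence s_1, …, s_{m+n} is periodic with period p, i.e., s_{i+p} = s_i for all 1 ≤ i ≤ m+n−p. (Thus a very thin torus front is invariant under translation by the vector (m/d, n/d), and its extreme corners repeat with period (m+n)/gcd(m,n).) -/
section Aux
variable (m n : ℕ) (s : Fin (m + n) → Bool)

/-- card of the `b`-steps before position `j`. -/
def bcnt (b : Bool) (j : ℕ) : ℕ :=
  (Finset.univ.filter (fun i : Fin (m + n) => i.val < j ∧ s i = b)).card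

lemma bcnt_succ (b : Bool) (k : ℕ) (hk : k < m + n) :
    bcnt m n s b (k + 1) = bcnt m n s b k + (if s ⟨k, hk⟩ = b then 1 else 0) := by
  classical
  unfold bcnt
  have hset : Finset.univ.filter (fun i : Fin (m + n) => i.val < k + 1 ∧ s i = b)
      = (Finset.univ.filter (fun i : Fin (m + n) => i.val < k ∧ s i = b)) ∪
        (if s ⟨k, hk⟩ = b then {(⟨k, hk⟩ : Fin (m + n))} else ∅) := by
    ext x
    by_cases hsb : s ⟨k, hk⟩ = b
    · simp only [hsb, if_true, Finset.mem_union, Finset.mem_filter, Finset.mem_univ,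
        true_and, Finset.mem_singleton, Nat.lt_succ_iff_lt_or_eq]
      constructor
      · rintro ⟨hlt | heq, hb⟩
        · exact Or.inl ⟨hlt, hb⟩
        · exact Or.inr (Fin.ext heq)
      · rintro (⟨hlt, hb⟩ | rfl)
        · exact ⟨Or.inl hlt, hb⟩
        · exact ⟨Or.inr rfl, hsb⟩
    · simp only [hsb, if_false, Finset.union_empty, Finset.mem_filter, Finset.mem_univ,
        true_and, Nat.lt_succ_iff_lt_or_eq]
      constructor
      · rintro ⟨hlt | heq, hb⟩
        · exact ⟨hlt, hb⟩
        · exact absurd (by rw [show x = (⟨k, hk⟩ : Fin (m+n)) from Fin.ext heq] at hb; exact hb) hsb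
      · rintro ⟨hlt, hb⟩; exact ⟨Or.inl hlt, hb⟩
  rw [hset, Finset.card_union_of_disjoint]
  · by_cases hsb : s ⟨k, hk⟩ = b <;> simp [hsb]
  · by_cases hsb : s ⟨k, hk⟩ = b <;> simp [hsb, Finset.disjoint_singleton_right]

lemma bcnt_add (j : ℕ) (hj : j ≤ m + n) :
    bcnt m n s true j + bcnt m n s false j = j := by
  classical
  unfold bcnt
  have h1 : ∀ b : Bool, Finset.univ.filter (fun i : Fin (m + n) => i.val < j ∧ s i = b)
      = (Finset.univ.filter (fun i : Fin (m + n) => i.val < j)).filter (fun i => s i = b) := by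
    intro b; rw [Finset.filter_filter]
  rw [h1 true, h1 false]
  have h2 : ((Finset.univ.filter (fun i : Fin (m + n) => i.val < j)).filter
      (fun i => s i = false)) = ((Finset.univ.filter (fun i : Fin (m + n) => i.val < j)).filter
      (fun i => ¬ (s i = true))) := by
    apply Finset.filter_congr; intro x _; simp
  rw [h2, Finset.card_filter_add_card_filter_not]
  have h3 : Finset.univ.filter (fun i : Fin (m + n) => i.val < j)
      = Finset.attachFin (Finset.range j)
        (fun x hx => lt_of_lt_of_le (Finset.mem_range.mp hx) hj) := by
    ext x; simp [Finset.mem_attachFin]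
  rw [h3, Finset.card_attachFin, Finset.card_range]

lemma pathF_eq (j : ℕ) (hj : j ≤ m + n) :
    pathF m n s j = (n : ℤ) * j - ((m : ℤ) + n) * (bcnt m n s false j) := by
  have h := bcnt_add m n s j hj
  unfold pathF
  show (n : ℤ) * (bcnt m n s true j) - (m : ℤ) * (bcnt m n s false j) = _
  have : (bcnt m n s true j : ℤ) = (j : ℤ) - (bcnt m n s false j : ℤ) := by
    have := congrArg (Nat.cast : ℕ → ℤ) h; push_cast at this ⊢; linarith
  rw [this]; ring

lemma pathF_step (k : ℕ) (hk : k < m + n) :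
    pathF m n s (k + 1) - pathF m n s k = if s ⟨k, hk⟩ then (n : ℤ) else -(m : ℤ) := by
  unfold pathF
  show (n : ℤ) * (bcnt m n s true (k+1)) - (m : ℤ) * (bcnt m n s false (k+1))
    - ((n : ℤ) * (bcnt m n s true k) - (m : ℤ) * (bcnt m n s false k)) = _
  rw [bcnt_succ m n s true k hk, bcnt_succ m n s false k hk]
  cases h : s ⟨k, hk⟩ <;> simp [h] <;> push_cast <;> ring

lemma spread_bound (u v : ℕ) (hu : u ≤ m + n) (hv : v ≤ m + n) :
    pathF m n s u - pathF m n s v ≤ pathSpread m n s := by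
  have hmu : pathF m n s u ∈ (Finset.range (m + n + 1)).image (pathF m n s) :=
    Finset.mem_image_of_mem _ (Finset.mem_range.mpr (Nat.lt_succ_of_le hu))
  have hmv : pathF m n s v ∈ (Finset.range (m + n + 1)).image (pathF m n s) :=
    Finset.mem_image_of_mem _ (Finset.mem_range.mpr (Nat.lt_succ_of_le hv))
  have h1 := Finset.le_max' _ _ hmu
  have h2 := Finset.min'_le _ _ hmv
  unfold pathSpread
  linarith

end Aux

/-- **Periodicity of very thin torus fronts.**
For `m, n ≥ 1`, set `d = gcd(m,n)` and `p = (m+n)/d`. If a monotone lattice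
path from `(0,0)` to `(m,n)` has spread strictly less than `m+n`, then its
step sequence is periodic with period `p`: whenever `j = i + p` (as indices of
steps), the `j`-th step equals the `i`-th step. -/
theorem cohomology_of_colorings_of_cycles_stmt13
    (m n : ℕ) (hm : 1 ≤ m) (hn : 1 ≤ n) (s : Fin (m + n) → Bool)
    (hs : (Finset.univ.filter (fun i => s i = true)).card = m)
    (hthin : pathSpread m n s < (m + n : ℤ)) :
    ∀ i j : Fin (m + n), (j : ℕ) = (i : ℕ) + (m + n) / Nat.gcd m n → s j = s i := by
  intro i j hij
  set d := Nat.gcd m n with hd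
  set p := (m + n) / d with hp
  have hdm : d ∣ m := Nat.gcd_dvd_left m n
  have hdn : d ∣ n := Nat.gcd_dvd_right m n
  have hdmn : d ∣ m + n := Nat.dvd_add hdm hdn
  have hd0 : 0 < d := Nat.gcd_pos_of_pos_left n hm
  have hpn : p * n = (m + n) * (n / d) := by
    obtain ⟨a, ha⟩ := hdmn
    obtain ⟨b, hb⟩ := hdn
    rw [hp, ha, hb, Nat.mul_div_cancel_left _ hd0, Nat.mul_div_cancel_left _ hd0]
    ring
  -- key: F is equal at points differing by p
  have key : ∀ u v : ℕ, v ≤ m + n → v = u + p → pathF m n s v = pathF m n s u := by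
    intro u v hv huv
    have hu : u ≤ m + n := le_trans (by rw [huv]; exact Nat.le_add_right u p) hv
    have hdvd : ((m : ℤ) + n) ∣ (pathF m n s v - pathF m n s u) := by
      rw [pathF_eq m n s v hv, pathF_eq m n s u hu]
      have : (n : ℤ) * v - (n : ℤ) * u = ((m : ℤ) + n) * ((n / d : ℕ) : ℤ) := by
        have hv' : (v : ℤ) = (u : ℤ) + (p : ℤ) := by exact_mod_cast congrArg (Nat.cast : ℕ → ℤ) huv
        have hpn' : (p : ℤ) * n = ((m : ℤ) + n) * ((n / d : ℕ) : ℤ) := by exact_mod_cast congrArg (Nat.cast : ℕ → ℤ) hpn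
        rw [hv']; ring_nf; ring_nf at hpn'; linarith
      refine ⟨((n / d : ℕ) : ℤ) - ((bcnt m n s false v : ℤ) - (bcnt m n s false u : ℤ)), ?_⟩
      rw [mul_sub, ← this]; ring
    have habs : |pathF m n s v - pathF m n s u| < (m : ℤ) + n := by
      rw [abs_lt]
      constructor
      · have := spread_bound m n s u v hu hv; push_cast at hthin ⊢; linarith
      · have := spread_bound m n s v u hv hu; push_cast at hthin ⊢; linarith
    have := Int.eq_zero_of_abs_lt_dvd hdvd habs
    linarith
  have hjlt : (j : ℕ) < m + n := j.isLt
  have h1 : pathF m n s ((j : ℕ)) = pathF m n s ((i : ℕ)) :=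
    key (i : ℕ) (j : ℕ) (le_of_lt hjlt) hij
  have h2 : pathF m n s ((j : ℕ) + 1) = pathF m n s ((i : ℕ) + 1) :=
    key ((i : ℕ) + 1) ((j : ℕ) + 1) hjlt (by omega)
  have hstepi := pathF_step m n s (i : ℕ) i.isLt
  have hstepj := pathF_step m n s (j : ℕ) j.isLt
  have heq : (if s ⟨(j : ℕ), j.isLt⟩ then (n : ℤ) else -(m : ℤ))
      = (if s ⟨(i : ℕ), i.isLt⟩ then (n : ℤ) else -(m : ℤ)) := by
    rw [← hstepi, ← hstepj, h1, h2]
  have hji : (⟨(j : ℕ), j.isLt⟩ : Fin (m + n)) = j := Fin.ext rfl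
  have hii : (⟨(i : ℕ), i.isLt⟩ : Fin (m + n)) = i := Fin.ext rfl
  rw [hji, hii] at heq
  cases hsj : s j <;> cases hsi : s i <;> rw [hsj, hsi] at heq <;> simp at heq <;> try rfl
  · exfalso; omega
  · exfalso; omega
end

section
/- Let p, q, g ≥ 1 be integers with q·(g−1) < p. Consider a monotone lattice path from (0,0) to (p,q) (p E-steps and q N-steps), with f(x,y) := q·x − p·y and spread defined as the difference between the maximum and minimum of f over the vertices of the path; assume the path is thin, i.e., its spread is at most p+q. Extend the step sequence (s_1, …, s_{p+q}) to all integer indices by s_{i+p+q} = s_i. Then between any two cyclically consecutive N-steps there are at least g−1 E-steps; that is, every horizontal leg of a thin torus front contains at least g vertices. -/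
/-- The periodic extension of the step sequence `s : Fin N → Bool` to all of `ℕ`. -/
def stepExt (N : ℕ) (s : Fin N → Bool) (i : ℕ) : Bool :=
  if h : 0 < N then s ⟨i % N, Nat.mod_lt _ h⟩ else true

/-!
Read the step sequence cyclically and let `h k` be the value of `f` after `k` steps, so `h` gains
`q` on each `E`-step and loses `p` on each `N`-step. Since the path closes up, `h` is
`(p+q)`-periodic, and all its values are values of `f` on the vertices of the path. Across a leg
with `k` `E`-steps bounded by two `N`-steps, `h` drops by `2p - qk`, so thinness forces
`p ≤ q(k+1)`; with `q(g-1) < p` this gives `g - 1 < k + 1`.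
-/

namespace TorusFront

lemma stepExt_val {N : ℕ} (s : Fin N → Bool) (i : Fin N) : stepExt N s i = s i := by
  simp [stepExt, i.pos, Nat.mod_eq_of_lt i.isLt]

section

variable (p q : ℕ) (s : Fin (p + q) → Bool)

def stepWeight (l : ℕ) : ℤ := if stepExt (p + q) s l then (q : ℤ) else -(p : ℤ)

/-- `height p q s k` is `f` at the `k`-th vertex of the periodically continued path. -/
def height (k : ℕ) : ℤ := ∑ l ∈ Finset.range k, stepWeight p q s l

lemma stepWeight_periodic : Function.Periodic (stepWeight p q s) (p + q) := by
  intro l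
  simp [stepWeight, stepExt, Nat.add_mod_right]

lemma height_succ (k : ℕ) : height p q s (k + 1) = height p q s k + stepWeight p q s k :=
  Finset.sum_range_succ _ _

lemma height_add (k m : ℕ) :
    height p q s (k + m) = height p q s k + ∑ l ∈ Finset.range m, stepWeight p q s (k + l) :=
  Finset.sum_range_add _ _ _

lemma pathF_eq_height {j : ℕ} (hj : j ≤ p + q) : pathF p q s j = height p q s j := by
  have hrange : (Finset.range (p + q)).filter (· < j) = Finset.range j := by
    ext l
    simp only [Finset.mem_filter, Finset.mem_range]
    omega
  have hsum : height p q s j = ∑ i ∈ Finset.univ.filter (fun i : Fin (p + q) => i.val < j),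
      (if s i then (q : ℤ) else -(p : ℤ)) := by
    rw [height, ← hrange, Finset.sum_filter,
      ← Fin.sum_univ_eq_sum_range (fun l => if l < j then stepWeight p q s l else 0),
      ← Finset.sum_filter]
    exact Finset.sum_congr rfl fun i _ => by rw [stepWeight, stepExt_val]
  rw [hsum, Finset.sum_ite, Finset.sum_const, Finset.sum_const, Finset.filter_filter,
    Finset.filter_filter, pathF]
  simp only [Bool.not_eq_true, smul_neg, nsmul_eq_mul]
  ring

lemma height_period (hs : (Finset.univ.filter (fun i => s i = true)).card = p) :
    height p q s (p + q) = 0 := by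
  have hfalse : (Finset.univ.filter (fun i => s i = false)).card = q := by
    have := Finset.card_filter_add_card_filter_not (s := Finset.univ) (fun i => s i = true)
    simp only [Finset.card_univ, Fintype.card_fin, Bool.not_eq_true] at this
    omega
  rw [← pathF_eq_height p q s le_rfl, pathF]
  simp only [Fin.is_lt, true_and, hs, hfalse]
  ring

lemma height_periodic (hs : (Finset.univ.filter (fun i => s i = true)).card = p) :
    Function.Periodic (height p q s) (p + q) := by
  intro k
  rw [add_comm, height_add, height_period p q s hs, zero_add]
  exact Finset.sum_congr rfl fun l _ => by rw [add_comm, stepWeight_periodic]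

lemma height_mem_vertexValues (hN : 0 < p + q)
    (hs : (Finset.univ.filter (fun i => s i = true)).card = p) (k : ℕ) :
    height p q s k ∈ (Finset.range (p + q + 1)).image (pathF p q s) := by
  rw [← (height_periodic p q s hs).map_mod_nat, ← pathF_eq_height p q s (Nat.mod_lt k hN).le]
  exact Finset.mem_image_of_mem _ (Finset.mem_range.mpr (Nat.lt_succ_of_lt (Nat.mod_lt k hN)))

lemma height_sub_height_le_pathSpread (hN : 0 < p + q)
    (hs : (Finset.univ.filter (fun i => s i = true)).card = p) (a b : ℕ) :
    height p q s a - height p q s b ≤ pathSpread p q s :=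
  sub_le_sub (Finset.le_max' _ _ (height_mem_vertexValues p q s hN hs a))
    (Finset.min'_le _ _ (height_mem_vertexValues p q s hN hs b))

lemma height_succ_of_north {l : ℕ} (hl : stepExt (p + q) s l = false) :
    height p q s (l + 1) = height p q s l - p := by
  rw [height_succ, stepWeight, hl]
  simp [sub_eq_add_neg]

lemma height_add_of_east {a k : ℕ}
    (heast : ∀ l, a ≤ l → l < a + k → stepExt (p + q) s l = true) :
    height p q s (a + k) = height p q s a + q * k := by
  induction k with
  | zero => simp
  | succ k ih =>
    rw [← add_assoc, height_succ, ih fun l hl hlk => heast l hl (by omega), stepWeight,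
      heast (a + k) (by omega) (by omega), if_pos rfl]
    push_cast
    ring

lemma le_mul_sub_of_leg (hp : 0 < p)
    (hs : (Finset.univ.filter (fun i => s i = true)).card = p)
    (hthin : pathSpread p q s ≤ (p + q : ℤ)) {i j : ℕ} (hij : i < j)
    (hi : stepExt (p + q) s i = false) (hj : stepExt (p + q) s j = false)
    (hmid : ∀ l : ℕ, i < l → l < j → stepExt (p + q) s l = true) :
    p ≤ q * (j - i) := by
  obtain ⟨k, rfl⟩ : ∃ k, j = i + 1 + k := ⟨j - i - 1, by omega⟩
  have hleg : height p q s (i + 1 + k) = height p q s (i + 1) + q * k :=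
    height_add_of_east p q s fun l hl hlk => hmid l (by omega) hlk
  have hdrop : height p q s i - height p q s (i + 1 + k + 1) = 2 * p - q * k := by
    rw [height_succ_of_north p q s hj, hleg, height_succ_of_north p q s hi]
    ring
  have := height_sub_height_le_pathSpread p q s (by omega) hs i (i + 1 + k + 1)
  rw [show i + 1 + k - i = k + 1 by omega]
  zify
  linarith

end

end TorusFront

theorem cohomology_of_colorings_of_cycles_stmt14_general
    (p q g : ℕ)
    (hpg : q * (g - 1) < p) (s : Fin (p + q) → Bool)
    (hs : (Finset.univ.filter (fun i => s i = true)).card = p)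
    (hthin : pathSpread p q s ≤ (p + q : ℤ)) :
    ∀ i j : ℕ, i < j →
      stepExt (p + q) s i = false → stepExt (p + q) s j = false →
      (∀ l : ℕ, i < l → l < j → stepExt (p + q) s l = true) →
      i + g ≤ j := by
  intro i j hij hi hj hmid
  have hleg :=
    TorusFront.le_mul_sub_of_leg p q s (Nat.zero_lt_of_lt hpg) hs hthin hij hi hj hmid
  have := Nat.lt_of_mul_lt_mul_left (hpg.trans_le hleg)
  omega

/-- **Every horizontal leg of a thin torus front contains at least `g` vertices.**
Let `p, q, g ≥ 1` with `q(g−1) < p`, and let `s` encode a monotone lattice path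
from `(0,0)` to `(p,q)` which is thin, i.e., whose spread is at most `p+q`.
Extend the step sequence periodically. Then between any two cyclically
consecutive northbound steps there are at least `g−1` eastbound steps. -/
theorem cohomology_of_colorings_of_cycles_stmt14
    (p q g : ℕ) (hp : 1 ≤ p) (hq : 1 ≤ q) (hg : 1 ≤ g)
    (hpg : q * (g - 1) < p) (s : Fin (p + q) → Bool)
    (hs : (Finset.univ.filter (fun i => s i = true)).card = p)
    (hthin : pathSpread p q s ≤ (p + q : ℤ)) :
    ∀ i j : ℕ, i < j →
      stepExt (p + q) s i = false → stepExt (p + q) s j = false →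
      (∀ l : ℕ, i < l → l < j → stepExt (p + q) s l = true) →
      i + g ≤ j :=
  cohomology_of_colorings_of_cycles_stmt14_general p q g hpg s hs hthin
end

section
/- Let m ≥ 2 and g ≥ 1 be integers and let n = g·m. Then there are exactly g g-spread m-element subsets of ZMod n (namely the sets {a, a+g, a+2g, …, a+(m−1)g} for a ∈ {0,…,g−1}), and no two of them are adjacent in the flip graph; that is, the complex Φ_{m,gm,g} is a disjoint union of g points. -/
open Classical

/-- The cyclic distance between two elements of `ZMod n`:
`dist(a,b) = min((a−b).val, (b−a).val)`. -/
def cycDist {n : ℕ} (a b : ZMod n) : ℕ := min (a - b).val (b - a).val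

/-- Adjacency in the flip graph: `S'` is obtained from `S` by replacing exactly
one element `a ∈ S` with `a + 1` or `a − 1`. -/
def flipAdj {n : ℕ} (S S' : Finset (ZMod n)) : Prop :=
  S ≠ S' ∧ ∃ a ∈ S, S' = insert (a + 1) (S.erase a) ∨ S' = insert (a - 1) (S.erase a)

lemma cycDist_comm {n : ℕ} (a b : ZMod n) : cycDist a b = cycDist b a := min_comm _ _

section Aux

variable {m g n : ℕ}

lemma g_lt_n (hm : 2 ≤ m) (hg : 1 ≤ g) (hn : n = g * m) : g < n := by
  subst hn; nlinarith

/-- Injectivity core: two "right g-shifts" of spread points agree only trivially. -/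
lemma inj_core_le (hm : 2 ≤ m) (hg : 1 ≤ g) (hn : n = g * m) [NeZero n]
    {S : Finset (ZMod n)} (hsp : ∀ a ∈ S, ∀ b ∈ S, a ≠ b → g ≤ cycDist a b)
    {s s' : ZMod n} (hs : s ∈ S) (hs' : s' ∈ S) {k k' : ℕ} (hk : k < g) (hk' : k' < g)
    (hkk' : k ≤ k') (heq : s + (k : ZMod n) = s' + (k' : ZMod n)) : s = s' ∧ k = k' := by
  have hgn : g < n := g_lt_n hm hg hn
  have hsub : s - s' = ((k' - k : ℕ) : ZMod n) := by
    push_cast [Nat.cast_sub hkk']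
    linear_combination heq
  have hval : (s - s').val = k' - k := by
    rw [hsub, ZMod.val_cast_of_lt (by omega)]
  by_cases hss : s = s'
  · refine ⟨hss, ?_⟩
    rw [hss, sub_self, ZMod.val_zero] at hval
    omega
  · exfalso
    have h1 := hsp s hs s' hs' hss
    have h2 : cycDist s s' ≤ (s - s').val := min_le_left _ _
    omega

lemma inj_core (hm : 2 ≤ m) (hg : 1 ≤ g) (hn : n = g * m) [NeZero n]
    {S : Finset (ZMod n)} (hsp : ∀ a ∈ S, ∀ b ∈ S, a ≠ b → g ≤ cycDist a b)
    {s s' : ZMod n} (hs : s ∈ S) (hs' : s' ∈ S) {k k' : ℕ} (hk : k < g) (hk' : k' < g)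
    (heq : s + (k : ZMod n) = s' + (k' : ZMod n)) : s = s' ∧ k = k' := by
  rcases le_total k k' with h | h
  · exact inj_core_le hm hg hn hsp hs hs' hk hk' h heq
  · obtain ⟨h1, h2⟩ := inj_core_le hm hg hn hsp hs' hs hk' hk h heq.symm
    exact ⟨h1.symm, h2.symm⟩

/-- A spread set of full size is closed under adding `g`. -/
lemma spread_step (hm : 2 ≤ m) (hg : 1 ≤ g) (hn : n = g * m) [NeZero n]
    {S : Finset (ZMod n)} (hcard : S.card = m)
    (hsp : ∀ a ∈ S, ∀ b ∈ S, a ≠ b → g ≤ cycDist a b)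
    {s : ZMod n} (hs : s ∈ S) : s + (g : ZMod n) ∈ S := by
  have hgn : g < n := g_lt_n hm hg hn
  set f : ZMod n × ℕ → ZMod n := fun p => p.1 + (p.2 : ZMod n) with hf
  have hinj : Set.InjOn f ↑(S ×ˢ Finset.range g) := by
    rintro ⟨x, k⟩ hx ⟨y, k'⟩ hy hfe
    simp only [Finset.coe_product, Set.mem_prod, Finset.mem_coe, Finset.mem_range] at hx hy
    obtain ⟨h1, h2⟩ := inj_core hm hg hn hsp hx.1 hy.1 hx.2 hy.2 hfe
    exact Prod.ext h1 h2
  have hcardU : ((S ×ˢ Finset.range g).image f).card = n := by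
    rw [Finset.card_image_of_injOn hinj, Finset.card_product, Finset.card_range,
      hcard, hn, mul_comm]
  have hU : (S ×ˢ Finset.range g).image f = Finset.univ :=
    Finset.eq_univ_of_card _ (by rw [hcardU, ZMod.card])
  have hmem : s + (g : ZMod n) ∈ (S ×ˢ Finset.range g).image f := by
    rw [hU]; exact Finset.mem_univ _
  obtain ⟨⟨x, k⟩, hp, hfe⟩ := Finset.mem_image.mp hmem
  rw [Finset.mem_product, Finset.mem_range] at hp
  obtain ⟨hxS, hkg⟩ := hp
  simp only [hf] at hfe
  by_cases hk0 : k = 0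
  · subst hk0
    simp only [Nat.cast_zero, add_zero] at hfe
    rw [← hfe]; exact hxS
  · exfalso
    have hxs : x - s = ((g - k : ℕ) : ZMod n) := by
      push_cast [Nat.cast_sub hkg.le]
      linear_combination hfe
    have hval : (x - s).val = g - k := by
      rw [hxs, ZMod.val_cast_of_lt (by omega)]
    have hxns : x ≠ s := by
      intro h; rw [h, sub_self, ZMod.val_zero] at hval; omega
    have h1 := hsp x hxS s hs hxns
    have h2 : cycDist x s ≤ (x - s).val := min_le_left _ _
    omega

lemma spread_iter (hm : 2 ≤ m) (hg : 1 ≤ g) (hn : n = g * m) [NeZero n]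
    {S : Finset (ZMod n)} (hcard : S.card = m)
    (hsp : ∀ a ∈ S, ∀ b ∈ S, a ≠ b → g ≤ cycDist a b)
    {s : ZMod n} (hs : s ∈ S) : ∀ j : ℕ, s + ((j * g : ℕ) : ZMod n) ∈ S := by
  intro j
  induction j with
  | zero => simpa using hs
  | succ j ih =>
    have hstep := spread_step hm hg hn hcard hsp ih
    have he : s + (((j + 1) * g : ℕ) : ZMod n)
        = (s + ((j * g : ℕ) : ZMod n)) + (g : ZMod n) := by
      push_cast; ring
    rw [he]; exact hstep

lemma card_AP (hm : 2 ≤ m) (hg : 1 ≤ g) (hn : n = g * m) [NeZero n] (s : ZMod n) :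
    ((Finset.range m).image (fun j => s + ((j * g : ℕ) : ZMod n))).card = m := by
  rw [Finset.card_image_of_injOn, Finset.card_range]
  intro i hi j hj hij
  simp only [Finset.mem_coe, Finset.mem_range] at hi hj
  have h1 : ((i * g : ℕ) : ZMod n) = ((j * g : ℕ) : ZMod n) := by
    have := hij
    simp only [add_right_inj] at this
    exact this
  have hin : i * g < n := by rw [hn]; nlinarith
  have hjn : j * g < n := by rw [hn]; nlinarith
  have h2 := congrArg ZMod.val h1
  rw [ZMod.val_cast_of_lt hin, ZMod.val_cast_of_lt hjn] at h2
  exact Nat.eq_of_mul_eq_mul_right (by omega) h2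

/-- A spread set of full size is the arithmetic progression through any of its points. -/
lemma spread_struct (hm : 2 ≤ m) (hg : 1 ≤ g) (hn : n = g * m) [NeZero n]
    {S : Finset (ZMod n)} (hcard : S.card = m)
    (hsp : ∀ a ∈ S, ∀ b ∈ S, a ≠ b → g ≤ cycDist a b)
    {s : ZMod n} (hs : s ∈ S) :
    S = (Finset.range m).image (fun j => s + ((j * g : ℕ) : ZMod n)) := by
  have hsub : (Finset.range m).image (fun j => s + ((j * g : ℕ) : ZMod n)) ⊆ S := by
    intro x hx
    obtain ⟨j, _, rfl⟩ := Finset.mem_image.mp hx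
    exact spread_iter hm hg hn hcard hsp hs j
  exact (Finset.eq_of_subset_of_card_le hsub
    (by rw [card_AP hm hg hn, hcard])).symm

/-- The AP through `s` equals the normalized AP starting at `s.val % g`. -/
lemma struct_normal (hm : 2 ≤ m) (hg : 1 ≤ g) (hn : n = g * m) [NeZero n] (s : ZMod n) :
    (Finset.range m).image (fun j => s + ((j * g : ℕ) : ZMod n))
      = (Finset.range m).image (fun j => ((s.val % g + j * g : ℕ) : ZMod n)) := by
  apply Finset.eq_of_subset_of_card_le
  · intro x hx
    obtain ⟨j, hj, rfl⟩ := Finset.mem_image.mp hx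
    rw [Finset.mem_range] at hj
    set a := s.val % g with ha
    set q := s.val / g with hq
    have h0 : a + q * g = s.val := by rw [ha, hq, mul_comm]; exact Nat.mod_add_div s.val g
    have hs0 : ((a + q * g : ℕ) : ZMod n) = s := by
      rw [h0]; exact ZMod.natCast_rightInverse s
    refine Finset.mem_image.mpr ⟨(q + j) % m, Finset.mem_range.mpr (Nat.mod_lt _ (by omega)), ?_⟩
    have h1 : (q + j) * g = ((q + j) % m) * g + ((q + j) / m) * n := by
      conv_lhs => rw [← Nat.mod_add_div (q + j) m]
      rw [hn]; ring
    have h2 : (((q + j) % m * g : ℕ) : ZMod n) = (((q + j) * g : ℕ) : ZMod n) := by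
      rw [h1]
      push_cast [ZMod.natCast_self]
      ring
    calc ((a + (q + j) % m * g : ℕ) : ZMod n)
        = (a : ZMod n) + (((q + j) % m * g : ℕ) : ZMod n) := by push_cast; ring
      _ = (a : ZMod n) + (((q + j) * g : ℕ) : ZMod n) := by rw [h2]
      _ = ((a + q * g : ℕ) : ZMod n) + ((j * g : ℕ) : ZMod n) := by push_cast; ring
      _ = s + ((j * g : ℕ) : ZMod n) := by rw [hs0]
  · calc ((Finset.range m).image (fun j => ((s.val % g + j * g : ℕ) : ZMod n))).card
        ≤ (Finset.range m).card := Finset.card_image_le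
      _ = m := Finset.card_range m
      _ = ((Finset.range m).image (fun j => s + ((j * g : ℕ) : ZMod n))).card :=
          (card_AP hm hg hn s).symm

/-- The normalized APs have card `m`. -/
lemma T_card (hm : 2 ≤ m) (hg : 1 ≤ g) (hn : n = g * m) [NeZero n] {a : ℕ} (ha : a < g) :
    ((Finset.range m).image (fun j => ((a + j * g : ℕ) : ZMod n))).card = m := by
  rw [Finset.card_image_of_injOn, Finset.card_range]
  intro i hi j hj hij
  simp only [Finset.mem_coe, Finset.mem_range] at hi hj
  have hin : a + i * g < n := by rw [hn]; nlinarith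
  have hjn : a + j * g < n := by rw [hn]; nlinarith
  have h2 := congrArg ZMod.val hij
  rw [ZMod.val_cast_of_lt hin, ZMod.val_cast_of_lt hjn] at h2
  have h3 : i * g = j * g := by omega
  exact Nat.eq_of_mul_eq_mul_right (by omega) h3

/-- The normalized APs are g-spread. -/
lemma T_spread (hm : 2 ≤ m) (hg : 1 ≤ g) (hn : n = g * m) [NeZero n] {a : ℕ} (ha : a < g) :
    ∀ x ∈ (Finset.range m).image (fun j => ((a + j * g : ℕ) : ZMod n)),
    ∀ y ∈ (Finset.range m).image (fun j => ((a + j * g : ℕ) : ZMod n)),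
    x ≠ y → g ≤ cycDist x y := by
  have key : ∀ i j : ℕ, i < j → j < m →
      g ≤ cycDist ((a + i * g : ℕ) : ZMod n) ((a + j * g : ℕ) : ZMod n) := by
    intro i j hij hjm
    set x : ZMod n := ((a + i * g : ℕ) : ZMod n) with hx
    set y : ZMod n := ((a + j * g : ℕ) : ZMod n) with hy
    set d := (j - i) * g with hd
    have hdg : g ≤ d := by
      have : 1 ≤ j - i := by omega
      calc g = 1 * g := (one_mul g).symm
        _ ≤ (j - i) * g := Nat.mul_le_mul_right g this
    have hdn : d ≤ n - g := by
      have h1 : j - i ≤ m - 1 := by omega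
      have h2 : d ≤ (m - 1) * g := Nat.mul_le_mul_right g h1
      have h3 : (m - 1) * g = g * m - g := by
        cases m with
        | zero => omega
        | succ m' => simp [Nat.succ_sub_one]; ring_nf; omega
      omega
    have hgn : g < n := g_lt_n hm hg hn
    have hnat : a + j * g = (a + i * g) + d := by
      have : (j - i) * g + i * g = j * g := by
        rw [← Nat.add_mul]; congr 1; omega
      omega
    have e1 : y - x = ((d : ℕ) : ZMod n) := by
      rw [hy, hx, hnat]; push_cast; ring
    have v1 : (y - x).val = d := by
      rw [e1, ZMod.val_cast_of_lt (by omega)]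
    have e2 : x - y = ((n - d : ℕ) : ZMod n) := by
      have hc : ((n - d : ℕ) : ZMod n) = -((d : ℕ) : ZMod n) := by
        push_cast [Nat.cast_sub (show d ≤ n by omega)]
        simp [ZMod.natCast_self]
      rw [hc]
      linear_combination -e1
    have v2 : (x - y).val = n - d := by
      rw [e2, ZMod.val_cast_of_lt (by omega)]
    have : g ≤ min (x - y).val (y - x).val := le_min (by omega) (by omega)
    exact this
  intro x hx y hy hxy
  obtain ⟨i, hi, rfl⟩ := Finset.mem_image.mp hx
  obtain ⟨j, hj, rfl⟩ := Finset.mem_image.mp hy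
  rw [Finset.mem_range] at hi hj
  rcases lt_trichotomy i j with h | h | h
  · exact key i j h hj
  · exact absurd (by rw [h]) hxy
  · rw [cycDist_comm]; exact key j i h hi

end Aux

/-- **`Φ_{m,gm,g}` is a disjoint union of `g` points.** For `m ≥ 2`, `g ≥ 1` and
`n = g·m`, the `g`-spread `m`-element subsets of `ZMod n` are exactly the `g`
sets `{a, a+g, …, a+(m−1)g}` for `a ∈ {0,…,g−1}`; there are exactly `g` of
them, and no two of them are adjacent in the flip graph. -/
theorem cohomology_of_colorings_of_cycles_stmt16
    (m g n : ℕ) (hm : 2 ≤ m) (hg : 1 ≤ g) (hn : n = g * m) [NeZero n] :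
    (Finset.univ.filter (fun S : Finset (ZMod n) =>
        S.card = m ∧ ∀ a ∈ S, ∀ b ∈ S, a ≠ b → g ≤ cycDist a b)
      = (Finset.range g).image
          (fun a => (Finset.range m).image (fun j => ((a + j * g : ℕ) : ZMod n)))) ∧
    (Finset.univ.filter (fun S : Finset (ZMod n) =>
        S.card = m ∧ ∀ a ∈ S, ∀ b ∈ S, a ≠ b → g ≤ cycDist a b)).card = g ∧
    (∀ S S' : Finset (ZMod n),
      (S.card = m ∧ ∀ a ∈ S, ∀ b ∈ S, a ≠ b → g ≤ cycDist a b) →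
      (S'.card = m ∧ ∀ a ∈ S', ∀ b ∈ S', a ≠ b → g ≤ cycDist a b) →
      ¬ flipAdj S S') := by
  -- every spread set of full size is a normalized AP
  have hform : ∀ S : Finset (ZMod n), S.card = m →
      (∀ a ∈ S, ∀ b ∈ S, a ≠ b → g ≤ cycDist a b) →
      ∃ a : ℕ, a < g ∧
        S = (Finset.range m).image (fun j => ((a + j * g : ℕ) : ZMod n)) := by
    intro S hc hsp
    obtain ⟨s, hs⟩ := Finset.card_pos.mp (by omega : 0 < S.card)
    exact ⟨s.val % g, Nat.mod_lt _ (by omega),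
      (spread_struct hm hg hn hc hsp hs).trans (struct_normal hm hg hn s)⟩
  have hEq : (Finset.univ.filter (fun S : Finset (ZMod n) =>
        S.card = m ∧ ∀ a ∈ S, ∀ b ∈ S, a ≠ b → g ≤ cycDist a b)
      = (Finset.range g).image
          (fun a => (Finset.range m).image (fun j => ((a + j * g : ℕ) : ZMod n)))) := by
    ext S
    simp only [Finset.mem_filter, Finset.mem_univ, true_and, Finset.mem_image,
      Finset.mem_range]
    constructor
    · rintro ⟨hc, hsp⟩
      obtain ⟨a, ha, hS⟩ := hform S hc hsp
      exact ⟨a, ha, hS.symm⟩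
    · rintro ⟨a, ha, rfl⟩
      exact ⟨T_card hm hg hn ha, T_spread hm hg hn ha⟩
  -- injectivity of a ↦ T a on range g
  have hgn : g < n := g_lt_n hm hg hn
  have hinjT : ∀ a < g, ∀ b < g,
      (Finset.range m).image (fun j => ((a + j * g : ℕ) : ZMod n))
        = (Finset.range m).image (fun j => ((b + j * g : ℕ) : ZMod n)) → a = b := by
    intro a ha b hb hab
    have haT : ((a : ℕ) : ZMod n)
        ∈ (Finset.range m).image (fun j => ((a + j * g : ℕ) : ZMod n)) :=
      Finset.mem_image.mpr ⟨0, Finset.mem_range.mpr (by omega), by simp⟩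
    rw [hab] at haT
    obtain ⟨j, hj, hje⟩ := Finset.mem_image.mp haT
    rw [Finset.mem_range] at hj
    have hbn : b + j * g < n := by rw [hn]; nlinarith
    have h2 := congrArg ZMod.val hje
    rw [ZMod.val_cast_of_lt hbn, ZMod.val_cast_of_lt (by omega : a < n)] at h2
    rcases Nat.eq_zero_or_pos j with h | h
    · rw [h, Nat.zero_mul] at h2; omega
    · have : g ≤ j * g := Nat.le_mul_of_pos_left g h
      omega
  refine ⟨hEq, ?_, ?_⟩
  · rw [hEq, Finset.card_image_of_injOn, Finset.card_range]
    intro a ha b hb hab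
    simp only [Finset.mem_coe, Finset.mem_range] at ha hb
    exact hinjT a ha b hb hab
  · rintro S S' ⟨hc, hsp⟩ ⟨hc', hsp'⟩ ⟨hne, a, haS, hor⟩
    obtain ⟨b, hb, hSb⟩ := hform S hc hsp
    obtain ⟨c, hcg, hSc⟩ := hform S' hc' hsp'
    have hbc : b ≠ c := by
      intro h; apply hne; rw [hSb, hSc, h]
    -- a common element of S and S'
    obtain ⟨x, hx⟩ : (S.erase a).Nonempty := by
      apply Finset.card_pos.mp
      rw [Finset.card_erase_of_mem haS, hc]
      omega
    have hxS : x ∈ S := Finset.mem_of_mem_erase hx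
    have hxS' : x ∈ S' := by
      rcases hor with h | h <;> rw [h] <;> exact Finset.mem_insert_of_mem hx
    rw [hSb] at hxS
    rw [hSc] at hxS'
    obtain ⟨i, hi, hie⟩ := Finset.mem_image.mp hxS
    obtain ⟨j, hj, hje⟩ := Finset.mem_image.mp hxS'
    rw [Finset.mem_range] at hi hj
    have h1 : ((b + i * g : ℕ) : ZMod n) = ((c + j * g : ℕ) : ZMod n) := by
      rw [hie, hje]
    have hbn : b + i * g < n := by rw [hn]; nlinarith
    have hcn : c + j * g < n := by rw [hn]; nlinarith
    have h2 := congrArg ZMod.val h1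
    rw [ZMod.val_cast_of_lt hbn, ZMod.val_cast_of_lt hcn] at h2
    apply hbc
    calc b = b % g := (Nat.mod_eq_of_lt hb).symm
      _ = (b + i * g) % g := (Nat.add_mul_mod_self_right b i g).symm
      _ = (c + j * g) % g := by rw [h2]
      _ = c % g := Nat.add_mul_mod_self_right c j g
      _ = c := Nat.mod_eq_of_lt hcg
end

section
/- Let m ≥ 1, g ≥ 1 and n be integers with n > g·m. Then the flip graph on the g-spread m-element subsets of ZMod n is connected: any g-spread m-subset can be transformed into any other by a sequence of moves, each replacing a single element a by a+1 or a−1 while preserving the g-spread condition. (This expresses that the complex Φ_{m,n,g} is connected whenever n > gm.) -/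
/-!
Cut the cycle at `0` and list a `g`-spread set increasingly by naturals
`c 0 < ⋯ < c (m-1) < n`: consecutive gaps are at least `g`, and so is the wrap-around gap
`c 0 + n - c (m-1)`. Unless `c i = i * g` for all `i`, some point can be moved down by one
without breaking these inequalities, and this decreases `∑ i, c i`: the first point that is
not packed behind `c 0` if there is one, and otherwise `c 0` itself, for which `g * m < n` is
exactly the room needed. So every spread set is connected to `{0, g, …, (m-1) * g}`, and
flips are reversible.
-/

open Finset Function

theorem Finset.image_univ_update_of_injective {ι α : Type*} [Fintype ι] [DecidableEq ι]
    [DecidableEq α] {f : ι → α} (hf : Injective f) (k : ι) (b : α) :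
    univ.image (update f k b) = insert b ((univ.image f).erase (f k)) := by
  ext x
  simp only [mem_image, mem_univ, true_and, mem_insert, mem_erase]
  constructor
  · rintro ⟨i, rfl⟩
    by_cases hik : i = k
    · subst hik
      simp
    · rw [update_of_ne hik]
      exact Or.inr ⟨hf.ne hik, i, rfl⟩
  · rintro (rfl | ⟨hx, i, rfl⟩)
    · exact ⟨k, update_self _ _ _⟩
    · have hik : i ≠ k := by rintro rfl; exact hx rfl
      exact ⟨i, update_of_ne hik _ _⟩

namespace CyclicSpread

variable {m g n : ℕ}

lemma cycDist_comm (a b : ZMod n) : cycDist a b = cycDist b a :=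
  min_comm _ _

@[simp]
lemma cycDist_self (a : ZMod n) : cycDist a a = 0 := by
  simp [cycDist]

lemma cycDist_natCast_of_lt {x y : ℕ} (hxy : x < y) (hyx : y < x + n) :
    cycDist (x : ZMod n) (y : ZMod n) = min (n - (y - x)) (y - x) := by
  have : NeZero n := ⟨by omega⟩
  have hval : ((y : ZMod n) - x).val = y - x := by
    rw [← Nat.cast_sub hxy.le, ZMod.val_natCast, Nat.mod_eq_of_lt (by omega)]
  have hne : (y : ZMod n) - x ≠ 0 := fun h => by
    rw [h, ZMod.val_zero] at hval
    omega
  rw [cycDist, ← neg_sub, ZMod.neg_val, if_neg hne, hval]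

lemma le_cycDist_natCast_iff {x y : ℕ} (hxy : x < y) (hyx : y < x + n) :
    g ≤ cycDist (x : ZMod n) (y : ZMod n) ↔ x + g ≤ y ∧ y + g ≤ x + n := by
  rw [cycDist_natCast_of_lt hxy hyx, le_min_iff]
  omega

lemma flipAdj_symm {A B : Finset (ZMod n)} (hcard : A.card = B.card) (h : flipAdj A B) :
    flipAdj B A := by
  obtain ⟨hne, a, ha, hB⟩ := h
  have key : ∀ b, B = insert b (A.erase a) → b ∉ A.erase a ∧ b ∈ B := fun b hb =>
    ⟨fun hmem => by
      rw [hb, insert_eq_of_mem hmem] at hcard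
      exact (card_erase_lt_of_mem ha).ne' hcard, hb ▸ mem_insert_self _ _⟩
  refine ⟨hne.symm, ?_⟩
  rcases hB with hB | hB
  · obtain ⟨hnot, hmem⟩ := key _ hB
    refine ⟨a + 1, hmem, Or.inr ?_⟩
    rw [hB, erase_insert hnot, add_sub_cancel_right, insert_erase ha]
  · obtain ⟨hnot, hmem⟩ := key _ hB
    refine ⟨a - 1, hmem, Or.inl ?_⟩
    rw [hB, erase_insert hnot, sub_add_cancel, insert_erase ha]

def IsSpread (m g n : ℕ) (S : Finset (ZMod n)) : Prop :=
  S.card = m ∧ ∀ a ∈ S, ∀ b ∈ S, a ≠ b → g ≤ cycDist a b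

def SpreadFlip (m g n : ℕ) (A B : Finset (ZMod n)) : Prop :=
  IsSpread m g n A ∧ IsSpread m g n B ∧ flipAdj A B

instance : Std.Symm (SpreadFlip m g n) where
  symm _ _ := fun ⟨hA, hB, h⟩ => ⟨hB, hA, flipAdj_symm (hA.1.trans hB.1.symm) h⟩

/-- A spread set listed in increasing order by representatives in `ℕ`; the second inequality
is the gap that wraps around `0`. -/
def IsSpreadConfig (g n : ℕ) (c : Fin m → ℕ) : Prop :=
  ∀ i j, i < j → c i + g ≤ c j ∧ c j + g ≤ c i + n

def configSet (n : ℕ) (c : Fin m → ℕ) : Finset (ZMod n) :=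
  univ.image fun i => (c i : ZMod n)

def canonicalConfig (m g : ℕ) : Fin m → ℕ :=
  fun i => i * g

namespace IsSpreadConfig

variable {c : Fin m → ℕ}

lemma le_cycDist (hg : 1 ≤ g) (hc : IsSpreadConfig g n c) {i j : Fin m} (hij : i < j) :
    g ≤ cycDist (c i : ZMod n) (c j) := by
  have := hc i j hij
  exact (le_cycDist_natCast_iff (by omega) (by omega)).mpr this

lemma injective_cast (hg : 1 ≤ g) (hc : IsSpreadConfig g n c) :
    Injective fun i => (c i : ZMod n) := by
  intro i j hij
  by_contra hne
  rcases Ne.lt_or_gt hne with h | h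
  · simpa [hij] using (hc.le_cycDist hg h).trans_lt' hg
  · simpa [hij] using (hc.le_cycDist hg h).trans_lt' hg

lemma isSpread (hg : 1 ≤ g) (hc : IsSpreadConfig g n c) : IsSpread m g n (configSet n c) := by
  refine ⟨by rw [configSet, card_image_of_injective _ (hc.injective_cast hg), card_univ,
    Fintype.card_fin], ?_⟩
  simp only [configSet, mem_image, mem_univ, true_and]
  rintro _ ⟨i, rfl⟩ _ ⟨j, rfl⟩ hne
  rcases lt_trichotomy i j with h | rfl | h
  · exact hc.le_cycDist hg h
  · exact absurd rfl hne
  · exact cycDist_comm _ _ ▸ hc.le_cycDist hg h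

lemma update_pred (hc : IsSpreadConfig g n c) {k : Fin m} (hlo : ∀ i < k, c i + g < c k)
    (hhi : ∀ j, k < j → c j + g < c k + n) : IsSpreadConfig g n (update c k (c k - 1)) := by
  intro i j hij
  rcases eq_or_ne i k with rfl | hik
  · rw [update_self, update_of_ne hij.ne']
    have := hc i j hij
    have := hhi j hij
    omega
  rcases eq_or_ne j k with rfl | hjk
  · rw [update_self, update_of_ne hik]
    have := hc i j hij
    have := hlo i hij
    omega
  · rw [update_of_ne hik, update_of_ne hjk]
    exact hc i j hij

lemma add_mul_le [NeZero m] (hc : IsSpreadConfig g n c) (i : Fin m) : c 0 + i * g ≤ c i := by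
  obtain ⟨m, rfl⟩ : ∃ m', m = m' + 1 := Nat.exists_eq_succ_of_ne_zero (NeZero.ne m)
  induction i using Fin.induction with
  | zero => simp
  | succ i ih =>
    have := (hc i.castSucc i.succ Fin.castSucc_lt_succ).1
    simp only [Fin.val_succ, Fin.val_castSucc] at ih ⊢
    linarith [add_one_mul (i : ℕ) g]

lemma exists_update_pred [NeZero m] (hn : g * m < n) (hc : IsSpreadConfig g n c)
    (hne : c ≠ canonicalConfig m g) :
    ∃ k, 1 ≤ c k ∧ IsSpreadConfig g n (update c k (c k - 1)) := by
  by_cases hgap : ∃ i, c 0 + i * g < c i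
  · obtain ⟨k, hk, hmin⟩ := WellFounded.has_min wellFounded_lt {i | c 0 + i * g < c i} hgap
    replace hk : c 0 + k * g < c k := hk
    refine ⟨k, by omega, hc.update_pred (fun i hik => ?_) (fun j hkj => ?_)⟩
    · have hi : c i ≤ c 0 + i * g := not_lt.mp fun h => hmin i h hik
      have : (i + 1 : ℕ) * g ≤ k * g := Nat.mul_le_mul_right g hik
      linarith [add_one_mul (i : ℕ) g]
    · have := (hc 0 j (lt_of_le_of_lt (Fin.zero_le k) hkj)).2
      have := Nat.zero_le ((k : ℕ) * g)
      omega
  · push Not at hgap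
    have hcan : ∀ i, c i = c 0 + i * g := fun i => le_antisymm (hgap i) (hc.add_mul_le i)
    have hc0 : c 0 ≠ 0 := fun h0 => hne (funext fun i => by simp [hcan i, h0, canonicalConfig])
    refine ⟨0, by omega, hc.update_pred (fun i hi => absurd hi (Fin.not_lt_zero i))
      (fun j _ => ?_)⟩
    have : (j + 1 : ℕ) * g ≤ m * g := Nat.mul_le_mul_right g j.isLt
    rw [hcan j]
    linarith [add_one_mul (j : ℕ) g, mul_comm g m]

end IsSpreadConfig

lemma exists_isSpreadConfig_of_isSpread [NeZero n] {S : Finset (ZMod n)}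
    (hS : IsSpread m g n S) :
    ∃ c : Fin m → ℕ, IsSpreadConfig g n c ∧ configSet n c = S := by
  have hcard : (S.image ZMod.val).card = m := by
    rw [card_image_of_injective S (ZMod.val_injective n), hS.1]
  set c := (S.image ZMod.val).orderEmbOfFin hcard
  have hmem : ∀ i, (c i : ZMod n) ∈ S := fun i => by
    obtain ⟨a, ha, hai⟩ := mem_image.mp (orderEmbOfFin_mem _ hcard i)
    rwa [← hai, ZMod.natCast_zmod_val]
  have hlt : ∀ i, c i < n := fun i => by
    obtain ⟨a, -, hai⟩ := mem_image.mp (orderEmbOfFin_mem _ hcard i)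
    exact hai ▸ ZMod.val_lt a
  refine ⟨c, fun i j hij => ?_, ?_⟩
  · have hcij : c i < c j := c.strictMono hij
    have hne : (c i : ZMod n) ≠ c j := fun h => by
      have := congrArg ZMod.val h
      rw [ZMod.val_natCast_of_lt (hlt i), ZMod.val_natCast_of_lt (hlt j)] at this
      omega
    have := hS.2 _ (hmem i) _ (hmem j) hne
    rwa [le_cycDist_natCast_iff hcij (by linarith [hlt j])] at this
  · calc configSet n c = (univ.image c).image ((↑) : ℕ → ZMod n) := by
          rw [image_image]; rfl
      _ = S := by
          rw [image_orderEmbOfFin_univ, image_image]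
          simp [Function.comp_def]

lemma flipAdj_configSet_update_pred (hn : 1 < n) {c : Fin m → ℕ}
    (hinj : Injective fun i => (c i : ZMod n)) {k : Fin m} (hk : 1 ≤ c k) :
    flipAdj (configSet n c) (configSet n (update c k (c k - 1))) := by
  have : Fact (1 < n) := ⟨hn⟩
  have hset : configSet n (update c k (c k - 1)) =
      insert ((c k : ZMod n) - 1) ((configSet n c).erase (c k : ZMod n)) := by
    rw [configSet, ← comp_def, comp_update, Nat.cast_sub hk, Nat.cast_one]
    exact image_univ_update_of_injective hinj _ _
  have hmem : (c k : ZMod n) ∈ configSet n c := mem_image_of_mem _ (mem_univ k)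
  have hnot : (c k : ZMod n) ∉ configSet n (update c k (c k - 1)) := by
    have : (c k : ZMod n) ≠ c k - 1 := fun h => one_ne_zero (sub_eq_self.mp h.symm)
    simp [hset, this]
  exact ⟨fun h => hnot (h ▸ hmem), _, hmem, Or.inr hset⟩

lemma sum_update_pred_lt {c : Fin m → ℕ} {k : Fin m} (hk : 1 ≤ c k) :
    ∑ i, update c k (c k - 1) i < ∑ i, c i := by
  refine sum_lt_sum (fun i _ => ?_) ⟨k, mem_univ k, by rw [update_self]; omega⟩
  rcases eq_or_ne i k with rfl | hik
  · rw [update_self]; omega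
  · rw [update_of_ne hik]

lemma reflTransGen_configSet_canonical [NeZero m] (hg : 1 ≤ g) (hn : g * m < n)
    {c : Fin m → ℕ} (hc : IsSpreadConfig g n c) :
    Relation.ReflTransGen (SpreadFlip m g n) (configSet n c)
      (configSet n (canonicalConfig m g)) := by
  have h1n : 1 < n := lt_of_le_of_lt (Nat.mul_pos hg (NeZero.pos m)) hn
  induction hsum : ∑ i, c i using Nat.strong_induction_on generalizing c with
  | _ N ih =>
  by_cases hcan : c = canonicalConfig m g
  · rw [hcan]
  obtain ⟨k, hk, hc'⟩ := hc.exists_update_pred hn hcan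
  have hstep : SpreadFlip m g n (configSet n c) (configSet n (update c k (c k - 1))) :=
    ⟨hc.isSpread hg, hc'.isSpread hg,
      flipAdj_configSet_update_pred h1n (hc.injective_cast hg) hk⟩
  exact .head hstep (ih _ (hsum ▸ sum_update_pred_lt hk) hc' rfl)

end CyclicSpread

open CyclicSpread in
/-- **`Φ_{m,n,g}` is connected whenever `n > gm`.** For `m, g ≥ 1` and
`n > g·m`, any `g`-spread `m`-element subset of `ZMod n` can be transformed
into any other by a sequence of single-element moves `a ↦ a ± 1`, each
preserving the `g`-spread condition. -/
theorem cohomology_of_colorings_of_cycles_stmt18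
    (m g n : ℕ) (hm : 1 ≤ m) (hg : 1 ≤ g) (hn : g * m < n) :
    ∀ S S' : Finset (ZMod n),
      (S.card = m ∧ ∀ a ∈ S, ∀ b ∈ S, a ≠ b → g ≤ cycDist a b) →
      (S'.card = m ∧ ∀ a ∈ S', ∀ b ∈ S', a ≠ b → g ≤ cycDist a b) →
      Relation.ReflTransGen (fun A B : Finset (ZMod n) =>
        (A.card = m ∧ ∀ a ∈ A, ∀ b ∈ A, a ≠ b → g ≤ cycDist a b) ∧
        (B.card = m ∧ ∀ a ∈ B, ∀ b ∈ B, a ≠ b → g ≤ cycDist a b) ∧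
        flipAdj A B) S S' := by
  intro S S' hS hS'
  have : NeZero m := ⟨by omega⟩
  have : NeZero n := ⟨by omega⟩
  obtain ⟨c, hc, rfl⟩ := exists_isSpreadConfig_of_isSpread hS
  obtain ⟨c', hc', rfl⟩ := exists_isSpreadConfig_of_isSpread hS'
  exact (reflTransGen_configSet_canonical hg hn hc).trans
    (Std.Symm.symm _ _ (reflTransGen_configSet_canonical hg hn hc'))
end
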